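/- arXiv:2402.02484 — 8 statements merged into one kernel-verified Lean document; each statement's English description precedes it below -/
import Mathlib

section
/- If f : ℝ^n → ℝ is real-analytic and not identically zero, then the zero set {x : f(x) = 0} has Lebesgue measure zero. -/
/-!
An analytic function of one variable that is not identically zero has isolated zeros, so its
zero set is countable, hence null for any measure without atoms. In several variables, Tonelli
reduces the claim to slices: if `f (x₀, y₀) ≠ 0`, then off the null set of `x` with
`f (x, y₀) = 0` the slice `y ↦ f (x, y)` is analytic and not identically zero, so its zero set
is null. Induction on the number of coordinates gives `𝕜ⁿ`, and `ℝⁿ` with the Euclidean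
structure carries the same Lebesgue measure.
-/

open MeasureTheory Filter Set

variable {𝕜 : Type*} [NontriviallyNormedField 𝕜]
  {E F : Type*} [NormedAddCommGroup E] [NormedSpace 𝕜 E] [MeasurableSpace E]
  [NormedAddCommGroup F] [NormedSpace 𝕜 F] [MeasurableSpace F]

variable (𝕜) in
def AnalyticZeroSetsNull (μ : Measure E) : Prop :=
  ∀ f : E → 𝕜, AnalyticOnNhd 𝕜 f univ → (∃ x, f x ≠ 0) → μ {x | f x = 0} = 0

namespace AnalyticZeroSetsNull

theorem of_subsingleton [Subsingleton E] (μ : Measure E) : AnalyticZeroSetsNull 𝕜 μ := by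
  rintro f - ⟨x, hx⟩
  convert measure_empty (μ := μ)
  exact eq_empty_of_forall_notMem fun y hy => hx (Subsingleton.elim x y ▸ hy)

theorem of_nullSingletonClass [MeasurableSpace 𝕜] [SecondCountableTopology 𝕜]
    [PreconnectedSpace 𝕜] (μ : Measure 𝕜) [NullSingletonClass μ] :
    AnalyticZeroSetsNull 𝕜 μ := by
  rintro f hf ⟨x, hx⟩
  have hcodiscrete : ∀ᶠ y in codiscreteWithin univ, f y ≠ 0 :=
    (hf.eqOn_zero_or_eventually_ne_zero_of_preconnected isPreconnected_univ).resolve_left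
      fun h => hx (h (mem_univ x))
  have hae : ∀ᵐ y ∂μ, f y ≠ 0 := by
    rw [← Measure.restrict_univ (μ := μ)]
    exact ae_restrict_le_codiscreteWithin MeasurableSet.univ hcodiscrete
  simpa only [ne_eq, not_not] using ae_iff.mp hae

theorem prod [OpensMeasurableSpace (E × F)] {μ : Measure E} {ν : Measure F}
    (hμ : AnalyticZeroSetsNull 𝕜 μ) (hν : AnalyticZeroSetsNull 𝕜 ν) :
    AnalyticZeroSetsNull 𝕜 (μ.prod ν) := by
  rintro f hf ⟨⟨x₀, y₀⟩, hx₀y₀⟩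
  have hclosed : IsClosed {p : E × F | f p = 0} :=
    isClosed_eq (continuousOn_univ.mp hf.continuousOn) continuous_const
  refine Measure.measure_prod_null_of_ae_null hclosed.measurableSet ?_
  have hgood : ∀ᵐ x ∂μ, f (x, y₀) ≠ 0 := by
    refine ae_iff.mpr ?_
    simpa only [ne_eq, not_not] using hμ (fun x => f (x, y₀))
      (hf.comp (analyticOnNhd_id.prod analyticOnNhd_const) (mapsTo_univ _ _)) ⟨x₀, hx₀y₀⟩
  filter_upwards [hgood] with x hx
  exact hν _ (hf.comp (analyticOnNhd_const.prod analyticOnNhd_id) (mapsTo_univ _ _)) ⟨y₀, hx⟩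

theorem of_measurePreserving [OpensMeasurableSpace F] {μ : Measure E} {ν : Measure F}
    (h : AnalyticZeroSetsNull 𝕜 μ) (e : E ≃L[𝕜] F) (he : MeasurePreserving e μ ν) :
    AnalyticZeroSetsNull 𝕜 ν := by
  rintro f hf ⟨y, hy⟩
  have hclosed : IsClosed {y : F | f y = 0} :=
    isClosed_eq (continuousOn_univ.mp hf.continuousOn) continuous_const
  rw [← he.measure_preimage hclosed.measurableSet.nullMeasurableSet]
  exact h _ (hf.comp ((e : E →L[𝕜] F).analyticOnNhd univ) (mapsTo_univ _ _))
    ⟨e.symm y, by simpa using hy⟩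

end AnalyticZeroSetsNull

theorem analyticZeroSetsNull_pi [MeasurableSpace 𝕜] [BorelSpace 𝕜]
    [SecondCountableTopology 𝕜] [PreconnectedSpace 𝕜]
    (μ : Measure 𝕜) [SigmaFinite μ] [NullSingletonClass μ] (n : ℕ) :
    AnalyticZeroSetsNull 𝕜 (Measure.pi fun _ : Fin n => μ) := by
  induction n with
  | zero => exact .of_subsingleton _
  | succ n ih =>
    have hcons : MeasurePreserving (Fin.consEquivL 𝕜 fun _ : Fin (n + 1) => 𝕜)
        (μ.prod (Measure.pi fun _ : Fin n => μ)) (Measure.pi fun _ => μ) := by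
      convert (measurePreserving_piFinSuccAbove (fun _ : Fin (n + 1) => μ) 0).symm using 1
      ext p i
      simp
    exact ((AnalyticZeroSetsNull.of_nullSingletonClass μ).prod ih).of_measurePreserving _ hcons

/-- If `f : ℝ^n → ℝ` is real-analytic on all of `ℝ^n` and not identically zero,
then its zero set has Lebesgue measure zero. -/
theorem analytic_zero_set_measure_zero (n : ℕ)
    (f : EuclideanSpace ℝ (Fin n) → ℝ)
    (hf : AnalyticOnNhd ℝ f Set.univ)
    (hne : ∃ x, f x ≠ 0) :
    MeasureTheory.volume {x : EuclideanSpace ℝ (Fin n) | f x = 0} = 0 :=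
  ((analyticZeroSetsNull_pi volume n).of_measurePreserving
    (EuclideanSpace.equiv (Fin n) ℝ).symm (PiLp.volume_preserving_toLp (Fin n))) f hf hne
end

section
/- Let σ : ℝ → ℝ be continuous and non-polynomial, and let two multisets {{(x_k^{(1)}, x_k^{(2)})}}_{k=1}^n and {{(x̄_k^{(1)}, x̄_k^{(2)})}}_{k=1}^n of points in ℝ^{d₁} × ℝ^{d₂} be distinct. Then there exist vectors a^{(1)} ∈ ℝ^{d₁}, a^{(2)} ∈ ℝ^{d₂} and scalars b^{(1)}, b^{(2)} ∈ ℝ such that ∑_k σ(a^{(1)}·x_k^{(1)} + b^{(1)})·σ(a^{(2)}·x_k^{(2)} + b^{(2)}) ≠ ∑_k σ(a^{(1)}·x̄_k^{(1)} + b^{(1)})·σ(a^{(2)}·x̄_k^{(2)} + b^{(2)}). -/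
/-!
Suppose `∑ᵢ cᵢ σ(s θᵢ + b) = 0` for all `s, b`, with distinct `θᵢ` and some `cᵢ ≠ 0`. The same
relation holds for every mollification `F = φ ⋆ σ`; differentiating `k` times in `s` at `s = 0`
gives `(∑ᵢ cᵢ θᵢ^k) F⁽ᵏ⁾ = 0`, and by Vandermonde some power sum `∑ᵢ cᵢ θᵢ^k` is nonzero. So every
mollification is a polynomial of degree `< k`, and so is their pointwise limit `σ`, because these
polynomials form a finite-dimensional, hence closed, subspace of `ℝ → ℝ`. Projecting on a direction
that separates finitely many points, the functions `(a, b) ↦ σ(a ⬝ᵥ z + b)` are linearly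
independent for distinct `z ∈ ℝᵈ`. Linear independence passes to pointwise products on
`ℝ^{d₁} × ℝ^{d₂}`, and a linearly independent family separates multisets.
-/

open Finset Polynomial MeasureTheory Filter Topology ContinuousLinearMap
open scoped Convolution

def polynomialFunctionsDegreeLT (n : ℕ) : Submodule ℝ (ℝ → ℝ) :=
  Submodule.span ℝ (Set.range fun k : Fin n => fun x : ℝ => x ^ (k : ℕ))

theorem isClosed_polynomialFunctionsDegreeLT (n : ℕ) :
    IsClosed (polynomialFunctionsDegreeLT n : Set (ℝ → ℝ)) :=
  have : FiniteDimensional ℝ (polynomialFunctionsDegreeLT n) :=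
    FiniteDimensional.span_of_finite ℝ (Set.finite_range _)
  Submodule.closed_of_finiteDimensional _

theorem exists_polynomial_of_mem_polynomialFunctionsDegreeLT {n : ℕ} {f : ℝ → ℝ}
    (hf : f ∈ polynomialFunctionsDegreeLT n) : ∃ p : ℝ[X], ∀ t, f t = p.eval t := by
  obtain ⟨c, rfl⟩ := Submodule.mem_span_range_iff_exists_fun ℝ |>.1 hf
  exact ⟨∑ k, C (c k) * X ^ (k : ℕ), fun t => by simp [eval_finsetSum]⟩

theorem mem_polynomialFunctionsDegreeLT_of_iteratedDeriv_eq_zero {n : ℕ} {F : ℝ → ℝ}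
    (hF : ContDiff ℝ n F) (h : iteratedDeriv n F = 0) : F ∈ polynomialFunctionsDegreeLT n := by
  cases n with
  | zero =>
    rw [iteratedDeriv_zero] at h
    exact h ▸ Submodule.zero_mem _
  | succ m =>
    have htaylor : F = ∑ k : Fin (m + 1),
        (((k : ℕ).factorial : ℝ)⁻¹ * iteratedDeriv k F 0) • fun x : ℝ => x ^ (k : ℕ) := by
      funext x
      simp only [Finset.sum_apply, Pi.smul_apply, smul_eq_mul]
      rw [Fin.sum_univ_eq_sum_range (fun k => (k.factorial : ℝ)⁻¹ * iteratedDeriv k F 0 * x ^ k)]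
      rcases eq_or_ne x 0 with rfl | hx
      · simp [Finset.sum_range_succ']
      obtain ⟨y, -, hy⟩ := taylor_mean_remainder_lagrange_iteratedDeriv hx.symm hF.contDiffOn
      rw [h, Pi.zero_apply, zero_mul, zero_div, sub_eq_zero, taylor_within_apply] at hy
      rw [hy]
      refine Finset.sum_congr rfl fun k hk => ?_
      rw [iteratedDerivWithin_eq_iteratedDeriv (uniqueDiffOn_uIcc hx.symm) _ Set.left_mem_uIcc]
      · rw [sub_zero, smul_eq_mul]
        ring
      · exact hF.contDiffAt.of_le (by exact_mod_cast (Finset.mem_range.1 hk).le)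
    rw [htaylor]
    exact Submodule.sum_mem _ fun k _ => Submodule.smul_mem _ _ (Submodule.subset_span ⟨k, rfl⟩)

theorem exists_sum_mul_pow_ne_zero {K ι : Type*} [Field K] {S : Finset ι} {θ : ι → K}
    (hθ : Set.InjOn θ S) {c : ι → K} {i₀ : ι} (hi₀ : i₀ ∈ S) (hc : c i₀ ≠ 0) :
    ∃ k : ℕ, ∑ i ∈ S, c i * θ i ^ k ≠ 0 := by
  classical
  by_contra! hpow
  have heval : ∀ q : K[X], ∑ i ∈ S, c i * q.eval (θ i) = 0 := by
    intro q
    simp only [eval_eq_sum_range' (Nat.lt_succ_self q.natDegree), Finset.mul_sum]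
    rw [Finset.sum_comm]
    refine Finset.sum_eq_zero fun k _ => ?_
    rw [← mul_zero (q.coeff k), ← hpow k, Finset.mul_sum]
    exact Finset.sum_congr rfl fun i _ => by ring
  set q : K[X] := ∏ j ∈ S.erase i₀, (X - C (θ j))
  have hq : ∑ i ∈ S, c i * q.eval (θ i) = c i₀ * q.eval (θ i₀) := by
    refine Finset.sum_eq_single_of_mem i₀ hi₀ fun i hi hne => ?_
    rw [eval_prod, Finset.prod_eq_zero (Finset.mem_erase.2 ⟨hne, hi⟩) (by simp), mul_zero]
  have hq₀ : q.eval (θ i₀) ≠ 0 := by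
    rw [eval_prod, Finset.prod_ne_zero_iff]
    intro j hj
    obtain ⟨hne, hj⟩ := Finset.mem_erase.1 hj
    rw [eval_sub, eval_X, eval_C, sub_ne_zero]
    exact fun h => hne (hθ hj hi₀ h.symm)
  exact mul_ne_zero hc hq₀ (hq ▸ heval q)

theorem iteratedDeriv_comp_mul_add {n : ℕ} {F : ℝ → ℝ} (hF : ContDiff ℝ n F) (θ b s : ℝ) :
    iteratedDeriv n (fun u => F (u * θ + b)) s = θ ^ n * iteratedDeriv n F (s * θ + b) := by
  have hFb : ContDiff ℝ n (fun z => F (z + b)) := hF.comp (contDiff_id.add contDiff_const)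
  simp_rw [mul_comm _ θ]
  rw [iteratedDeriv_comp_const_mul hFb θ, iteratedDeriv_comp_add_const]

section

variable {ι : Type*} {S : Finset ι} {θ c : ι → ℝ}

theorem iteratedDeriv_eq_zero_of_sum_mul_comp_mul_add_eq_zero {n : ℕ}
    (hn : ∑ i ∈ S, c i * θ i ^ n ≠ 0) {F : ℝ → ℝ} (hF : ContDiff ℝ n F)
    (hrel : ∀ s b, ∑ i ∈ S, c i * F (s * θ i + b) = 0) : iteratedDeriv n F = 0 := by
  funext b
  have hcomp : ∀ i ∈ S, ContDiffAt ℝ n (fun u => c i * F (u * θ i + b)) 0 := fun i _ =>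
    (contDiff_const.mul (hF.comp ((contDiff_id.mul contDiff_const).add contDiff_const))).contDiffAt
  have h := iteratedDeriv_fun_sum (x := (0 : ℝ)) hcomp
  simp only [hrel, iteratedDeriv_const_mul_field, iteratedDeriv_comp_mul_add hF, zero_mul,
    zero_add, iteratedDeriv_const, ite_self, ← mul_assoc, ← Finset.sum_mul] at h
  exact (mul_eq_zero.1 h.symm).resolve_left hn

theorem sum_mul_convolution_comp_mul_add_eq_zero {σ ψ : ℝ → ℝ} (hσ : Continuous σ)
    (hψ : Continuous ψ) (hψc : HasCompactSupport ψ)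
    (hrel : ∀ s b, ∑ i ∈ S, c i * σ (s * θ i + b) = 0) (s b : ℝ) :
    ∑ i ∈ S, c i * (ψ ⋆[lsmul ℝ ℝ] σ) (s * θ i + b) = 0 := by
  have hint : ∀ i ∈ S, Integrable (fun y => c i * (ψ y * σ (s * θ i + b - y))) := fun i _ =>
    ((hψ.mul (hσ.comp (continuous_const.sub continuous_id))).integrable_of_hasCompactSupport
      hψc.mul_right).const_mul _
  simp only [convolution_lsmul, smul_eq_mul, ← integral_const_mul]
  rw [← integral_finsetSum S hint]
  refine integral_eq_zero_of_ae (Eventually.of_forall fun y => ?_)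
  simp only [mul_left_comm (c _), ← Finset.mul_sum, add_sub_assoc, hrel, mul_zero, Pi.zero_apply]

theorem eq_zero_of_sum_mul_comp_mul_add_eq_zero {σ : ℝ → ℝ} (hσc : Continuous σ)
    (hσp : ¬ ∃ p : ℝ[X], ∀ t, σ t = p.eval t) (hθ : Set.InjOn θ S)
    (hrel : ∀ s b, ∑ i ∈ S, c i * σ (s * θ i + b) = 0) :
    ∀ i ∈ S, c i = 0 := by
  intro i₀ hi₀
  by_contra hc
  obtain ⟨n, hn⟩ := exists_sum_mul_pow_ne_zero hθ hi₀ hc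
  refine hσp (exists_polynomial_of_mem_polynomialFunctionsDegreeLT (n := n) ?_)
  let φ : ℕ → ContDiffBump (0 : ℝ) := fun m =>
    ⟨1 / (m + 2), 1 / (m + 1), by positivity, by gcongr; linarith⟩
  have hφ : Tendsto (fun m => (φ m).rOut) atTop (𝓝 0) := tendsto_one_div_add_atTop_nhds_zero_nat
  have hmem : ∀ m, (φ m).normed volume ⋆[lsmul ℝ ℝ] σ ∈ polynomialFunctionsDegreeLT n := by
    intro m
    have hsmooth : ContDiff ℝ n ((φ m).normed volume ⋆[lsmul ℝ ℝ] σ) :=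
      (φ m).hasCompactSupport_normed.contDiff_convolution_left _ (φ m).contDiff_normed
        hσc.locallyIntegrable
    refine mem_polynomialFunctionsDegreeLT_of_iteratedDeriv_eq_zero hsmooth
      (iteratedDeriv_eq_zero_of_sum_mul_comp_mul_add_eq_zero hn hsmooth ?_)
    exact sum_mul_convolution_comp_mul_add_eq_zero hσc (φ m).continuous_normed
      (φ m).hasCompactSupport_normed hrel
  exact (isClosed_polynomialFunctionsDegreeLT n).mem_of_tendsto
    (tendsto_pi_nhds.2 fun x => ContDiffBump.convolution_tendsto_right_of_continuous hφ hσc x)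
    (Eventually.of_forall hmem)

end

theorem exists_injOn_dotProduct {K ι : Type*} [Field K] [Infinite K] [Fintype ι]
    (S : Finset (ι → K)) : ∃ a : ι → K, Set.InjOn (a ⬝ᵥ ·) S := by
  classical
  let ker : (ι → K) → Subspace K (ι → K) := fun v =>
    LinearMap.ker ((dotProductBilin K K).flip v)
  have hproper : ⊤ ∉ (S.offDiag.image fun p => p.1 - p.2).image ker := by
    intro h
    obtain ⟨_, hv, htop⟩ := Finset.mem_image.1 h
    obtain ⟨⟨z, w⟩, hzw, rfl⟩ := Finset.mem_image.1 hv
    replace hzw := (Finset.mem_offDiag.1 hzw).2.2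
    obtain ⟨j, hj⟩ := Function.ne_iff.1 (sub_ne_zero.2 hzw)
    have : Pi.single j 1 ∈ ker (z - w) := htop ▸ Submodule.mem_top
    exact hj (by simpa [ker] using this)
  obtain ⟨a, ha⟩ := (Set.ne_univ_iff_exists_notMem _).1
    (Subspace.biUnion_ne_univ_of_top_notMem hproper)
  refine ⟨a, fun z hz w hw hzw => by_contra fun hne => ha ?_⟩
  simp only [Set.mem_iUnion]
  refine ⟨ker (z - w), Finset.mem_image_of_mem _
    (Finset.mem_image.2 ⟨(z, w), Finset.mem_offDiag.2 ⟨hz, hw, hne⟩, rfl⟩), ?_⟩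
  simp [ker, hzw]

def neuronFeatures {ι : Type*} [Fintype ι] (σ : ℝ → ℝ) (z : ι → ℝ) : (ι → ℝ) × ℝ → ℝ :=
  fun ab => σ (ab.1 ⬝ᵥ z + ab.2)

theorem linearIndependent_neuronFeatures {ι : Type*} [Fintype ι] {σ : ℝ → ℝ}
    (hσc : Continuous σ) (hσp : ¬ ∃ p : ℝ[X], ∀ t, σ t = p.eval t) :
    LinearIndependent ℝ (neuronFeatures (ι := ι) σ) := by
  refine linearIndependent_iff'.2 fun S c hc => ?_
  obtain ⟨a, ha⟩ := exists_injOn_dotProduct S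
  refine eq_zero_of_sum_mul_comp_mul_add_eq_zero hσc hσp ha fun s b => ?_
  simpa [neuronFeatures, smul_dotProduct] using congrFun hc (s • a, b)

theorem LinearIndependent.prod_mul {K α β ι κ : Type*} [CommRing K]
    {u : α → ι → K} {v : β → κ → K} (hu : LinearIndependent K u) (hv : LinearIndependent K v) :
    LinearIndependent K (fun p : α × β => fun q : ι × κ => u p.1 q.1 * v p.2 q.2) := by
  classical
  refine linearIndependent_iff''.2 fun s g hg hs => ?_
  have hfiber : ∀ z ∈ s.image Prod.fst, ∀ k : κ,
      ∑ w ∈ s.image Prod.snd, g (z, w) * v w k = 0 := by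
    intro z hz k
    refine linearIndependent_iff'.1 hu (s.image Prod.fst)
      (fun z => ∑ w ∈ s.image Prod.snd, g (z, w) * v w k) ?_ z hz
    funext i
    have := congrFun hs (i, k)
    simp only [Finset.sum_apply, Pi.smul_apply, smul_eq_mul, Pi.zero_apply] at this ⊢
    rw [← this, Finset.sum_subset s.subset_product (fun p _ hp => by simp [hg p hp]),
      Finset.sum_product]
    simp only [Finset.sum_mul]
    exact Finset.sum_congr rfl fun _ _ => Finset.sum_congr rfl fun _ _ => by ring
  rintro ⟨z, w⟩
  by_cases hp : (z, w) ∈ s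
  · refine linearIndependent_iff'.1 hv (s.image Prod.snd) (fun w => g (z, w)) ?_ w
      (Finset.mem_image_of_mem _ hp)
    funext k
    simpa [Finset.sum_apply] using hfiber z (Finset.mem_image_of_mem _ hp) k
  · exact hg _ hp

theorem LinearIndependent.multiset_eq_of_sum_map_eq {K V α : Type*} [Ring K] [CharZero K]
    [AddCommGroup V] [Module K V] {v : α → V} (hv : LinearIndependent K v) {M N : Multiset α}
    (h : (M.map v).sum = (N.map v).sum) : M = N := by
  classical
  have hsum : ∀ L : Multiset α, L.toFinset ⊆ M.toFinset ∪ N.toFinset →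
      (L.map v).sum = ∑ p ∈ M.toFinset ∪ N.toFinset, (L.count p : K) • v p := by
    intro L hL
    rw [Finset.sum_multiset_map_count, Finset.sum_subset hL]
    · simp only [Nat.cast_smul_eq_nsmul]
    · intro p _ hp
      rw [Multiset.count_eq_zero.2 (by simpa using hp), zero_smul]
  have hzero := linearIndependent_iff'.1 hv (M.toFinset ∪ N.toFinset)
    (fun p => (M.count p : K) - N.count p) (by
      simp only [sub_smul, Finset.sum_sub_distrib]
      rw [← hsum M Finset.subset_union_left, ← hsum N Finset.subset_union_right, h, sub_self])
  ext p
  by_cases hp : p ∈ M.toFinset ∪ N.toFinset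
  · exact_mod_cast sub_eq_zero.1 (hzero p hp)
  · simp only [Finset.mem_union, Multiset.mem_toFinset, not_or] at hp
    rw [Multiset.count_eq_zero.2 hp.1, Multiset.count_eq_zero.2 hp.2]

/-- For a continuous non-polynomial activation `σ`, distinct multisets of pairs of points can be
separated by a sum of products of shallow neurons. -/
theorem exists_neuron_product_separating (d₁ d₂ n : ℕ)
    (σ : ℝ → ℝ) (hσc : Continuous σ)
    (hσp : ¬ ∃ p : Polynomial ℝ, ∀ t : ℝ, σ t = p.eval t)
    (x xb : Fin n → (Fin d₁ → ℝ) × (Fin d₂ → ℝ))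
    (hne : (Finset.univ.val.map x) ≠ (Finset.univ.val.map xb)) :
    ∃ (a₁ : Fin d₁ → ℝ) (a₂ : Fin d₂ → ℝ) (b₁ b₂ : ℝ),
      ∑ k, σ ((∑ j, a₁ j * (x k).1 j) + b₁) * σ ((∑ j, a₂ j * (x k).2 j) + b₂) ≠
      ∑ k, σ ((∑ j, a₁ j * (xb k).1 j) + b₁) * σ ((∑ j, a₂ j * (xb k).2 j) + b₂) := by
  by_contra! h
  have hli := (linearIndependent_neuronFeatures (ι := Fin d₁) hσc hσp).prod_mul
    (linearIndependent_neuronFeatures (ι := Fin d₂) hσc hσp)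
  refine hne (hli.multiset_eq_of_sum_map_eq ?_)
  funext ⟨⟨a₁, b₁⟩, ⟨a₂, b₂⟩⟩
  simpa only [Multiset.map_map, ← Finset.sum_eq_multiset_sum, Finset.sum_apply,
    Function.comp_apply, neuronFeatures, dotProduct] using h a₁ a₂ b₁ b₂
end

section
/- Let σ : ℝ → ℝ be continuous and non-constant. If y ≠ y' are vectors in ℝ^K, then there exist a ∈ ℝ^K, b ∈ ℝ and a scaling s ∈ ℝ such that σ(s·(a·y) − s·b) ≠ σ(s·(a·y') − s·b). -/
/-- For continuous non-constant `σ` and distinct vectors `y ≠ y'` in `ℝ^K`, there are parameters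
`a, b` and a scaling `s` with `σ(s(a·y) − sb) ≠ σ(s(a·y') − sb)`. -/
theorem exists_scaled_neuron_separating (K : ℕ)
    (σ : ℝ → ℝ) (hσc : Continuous σ) (hσnc : ∃ u v : ℝ, σ u ≠ σ v)
    (y y' : Fin K → ℝ) (hyy : y ≠ y') :
    ∃ (a : Fin K → ℝ) (b s : ℝ),
      σ (s * (∑ j, a j * y j) - s * b) ≠ σ (s * (∑ j, a j * y' j) - s * b) := by
  obtain ⟨u, v, huv⟩ := hσnc
  -- choose a point w with σ w ≠ σ 0
  obtain ⟨w, hw⟩ : ∃ w, σ w ≠ σ 0 := by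
    by_cases h : σ u = σ 0
    · exact ⟨v, fun hv => huv (h.trans hv.symm)⟩
    · exact ⟨u, h⟩
  set a : Fin K → ℝ := fun j => y j - y' j with ha
  set b : ℝ := ∑ j, a j * y j with hb
  have hc : (∑ j, a j * y' j) - b ≠ 0 := by
    have : (∑ j, a j * y' j) - b = -∑ j, (y j - y' j)^2 := by
      simp only [hb, ha, ← Finset.sum_sub_distrib, ← Finset.sum_neg_distrib]
      exact Finset.sum_congr rfl fun j _ => by ring
    rw [this, neg_ne_zero]
    intro h0
    apply hyy
    funext j
    have := (Finset.sum_eq_zero_iff_of_nonneg (fun j _ => sq_nonneg (y j - y' j))).mp h0 j (Finset.mem_univ j)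
    nlinarith [this]
  set c := (∑ j, a j * y' j) - b with hcdef
  refine ⟨a, b, w / c, ?_⟩
  have h1 : w / c * (∑ j, a j * y j) - w / c * b = 0 := by
    rw [← mul_sub]; simp [hb]
  have h2 : w / c * (∑ j, a j * y' j) - w / c * b = w := by
    rw [← mul_sub, ← hcdef, div_mul_cancel₀ _ hc]
  rw [h1, h2]
  exact hw.symm
end

section
/- Two configurations (X,V), (X',V') ∈ (ℝ^{3×n})² are equivalent under simultaneous permutation of columns, a common orthogonal transformation R ∈ O(3) applied to all columns of both X and V, and a translation t applied only to the columns of X, if and only if there is a permutation τ such that for all i,j: ‖(x_i − x̄) − (x_j − x̄)‖ = ‖(x'_{τ(i)} − x̄') − (x'_{τ(j)} − x̄')‖, ‖(x_i − x̄) − v_j‖ = ‖(x'_{τ(i)} − x̄') − v'_{τ(j)}‖, ‖v_i − v_j‖ = ‖v'_{τ(i)} − v'_{τ(j)}‖, and ‖v_i‖ = ‖v'_{τ(i)}‖ for all i, where x̄ and x̄' denote the barycenters of X and X' respectively. -/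
/-!
Translations are removed by centering at the barycenter. For a centered cloud `c` (with
`∑ c j = 0`), summing `‖c i - c j‖² = ‖c i‖² - 2⟪c i, c j⟫ + ‖c j‖²` over `j` shows that the norms
`‖c i‖` are determined by the pairwise distances. The centered positions together with the
velocities then have the same norms and mutual distances as their primed counterparts, hence by
polarization the same Gram matrix, and two families with the same Gram matrix are related by a
linear isometry of the ambient space.
-/

open scoped RealInnerProductSpace

section Rigidity

variable {E : Type*} [NormedAddCommGroup E] [InnerProductSpace ℝ E]

theorem LinearMap.exists_linearIsometryEquiv_comp_eq [FiniteDimensional ℝ E]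
    {F : Type*} [AddCommGroup F] [Module ℝ F] (A B : F →ₗ[ℝ] E) (h : ∀ c, ‖A c‖ = ‖B c‖) :
    ∃ R : E ≃ₗᵢ[ℝ] E, ∀ c, R (A c) = B c := by
  have hker : LinearMap.ker A ≤ LinearMap.ker B := fun c hc => by
    rw [LinearMap.mem_ker, ← norm_eq_zero, ← h, norm_eq_zero]
    exact LinearMap.mem_ker.mp hc
  let L : LinearMap.range A →ₗ[ℝ] E :=
    ((LinearMap.ker A).liftQ B hker).comp A.quotKerEquivRange.symm.toLinearMap
  have hL : ∀ c, L ⟨A c, LinearMap.mem_range_self A c⟩ = B c := fun c => by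
    simp [L, A.quotKerEquivRange_symm_apply_image c]
  have hLn : ∀ s, ‖L s‖ = ‖s‖ := by
    rintro ⟨-, c, rfl⟩
    rw [hL c]
    exact (h c).symm
  let Li : LinearMap.range A →ₗᵢ[ℝ] E := ⟨L, hLn⟩
  refine ⟨Li.extend.toLinearIsometryEquiv rfl, fun c => ?_⟩
  rw [LinearIsometry.coe_toLinearIsometryEquiv]
  exact (Li.extend_apply ⟨A c, LinearMap.mem_range_self A c⟩).trans (hL c)

theorem exists_linearIsometryEquiv_of_inner_eq [FiniteDimensional ℝ E] {ι : Type*}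
    (a b : ι → E) (h : ∀ p q, ⟪a p, a q⟫ = ⟪b p, b q⟫) :
    ∃ R : E ≃ₗᵢ[ℝ] E, ∀ p, R (a p) = b p := by
  set A := Finsupp.linearCombination ℝ a
  set B := Finsupp.linearCombination ℝ b
  have hAB : (innerₛₗ ℝ).compl₁₂ A A = (innerₛₗ ℝ).compl₁₂ B B := by
    ext p q
    simp only [LinearMap.coe_comp, Function.comp_apply, Finsupp.lsingle_apply,
      LinearMap.compl₁₂_apply, Finsupp.linearCombination_single, one_smul, A, B]
    exact h p q
  obtain ⟨R, hR⟩ := A.exists_linearIsometryEquiv_comp_eq B fun c => by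
    rw [norm_eq_sqrt_real_inner, norm_eq_sqrt_real_inner]
    exact congrArg Real.sqrt (LinearMap.congr_fun₂ hAB c c)
  exact ⟨R, fun p => by simpa [A, B] using hR (Finsupp.single p 1)⟩

theorem inner_eq_of_norm_eq_of_norm_sub_eq {x y x' y' : E} (hx : ‖x‖ = ‖x'‖) (hy : ‖y‖ = ‖y'‖)
    (hxy : ‖x - y‖ = ‖x' - y'‖) : ⟪x, y⟫ = ⟪x', y'⟫ := by
  rw [real_inner_eq_norm_mul_self_add_norm_mul_self_sub_norm_sub_mul_self_div_two,
    real_inner_eq_norm_mul_self_add_norm_mul_self_sub_norm_sub_mul_self_div_two, hx, hy, hxy]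

theorem exists_linearIsometryEquiv_of_norm_eq_of_norm_sub_eq [FiniteDimensional ℝ E]
    {ι : Type*} (a b : ι → E) (hn : ∀ p, ‖a p‖ = ‖b p‖)
    (hd : ∀ p q, ‖a p - a q‖ = ‖b p - b q‖) :
    ∃ R : E ≃ₗᵢ[ℝ] E, ∀ p, R (a p) = b p :=
  exists_linearIsometryEquiv_of_inner_eq a b fun p q =>
    inner_eq_of_norm_eq_of_norm_sub_eq (hn p) (hn q) (hd p q)

end Rigidity

section Barycenter

variable {ι E F : Type*} [Fintype ι] [AddCommGroup E] [Module ℝ E] [AddCommGroup F] [Module ℝ F]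

noncomputable def barycenter (X : ι → E) : E := (Fintype.card ι : ℝ)⁻¹ • ∑ k, X k

theorem sum_sub_barycenter (X : ι → E) : ∑ i, (X i - barycenter X) = 0 := by
  cases isEmpty_or_nonempty ι
  · exact Finset.sum_of_isEmpty _
  rw [Finset.sum_sub_distrib, Finset.sum_const, Finset.card_univ, barycenter,
    ← Nat.cast_smul_eq_nsmul ℝ, smul_inv_smul₀ (by positivity), sub_self]

theorem barycenter_comp_equiv (X : ι → E) (σ : Equiv.Perm ι) :
    barycenter (X ∘ σ) = barycenter X := by
  simp only [barycenter, Function.comp_apply, Equiv.sum_comp]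

theorem barycenter_map {𝓕 : Type*} [FunLike 𝓕 E F] [LinearMapClass 𝓕 ℝ E F] (f : 𝓕)
    (X : ι → E) : barycenter (f ∘ X) = f (barycenter X) := by
  simp only [barycenter, Function.comp_apply, map_smul, map_sum]

theorem barycenter_add_const [Nonempty ι] (X : ι → E) (t : E) :
    barycenter (fun i => X i + t) = barycenter X + t := by
  rw [barycenter, Finset.sum_add_distrib, smul_add, Finset.sum_const, Finset.card_univ,
    ← Nat.cast_smul_eq_nsmul ℝ, inv_smul_smul₀ (by positivity), barycenter]

end Barycenter

section Centered

variable {ι E : Type*} [Fintype ι] [NormedAddCommGroup E] [InnerProductSpace ℝ E]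

theorem sum_norm_sub_sq_of_sum_eq_zero {c : ι → E} (h0 : ∑ k, c k = 0) (i : ι) :
    ∑ j, ‖c i - c j‖ ^ 2 = Fintype.card ι * ‖c i‖ ^ 2 + ∑ j, ‖c j‖ ^ 2 := by
  simp only [norm_sub_sq_real, Finset.sum_add_distrib, Finset.sum_sub_distrib, ← Finset.mul_sum,
    ← inner_sum, h0, inner_zero_right, mul_zero, sub_zero, Finset.sum_const, Finset.card_univ,
    nsmul_eq_mul]

theorem norm_eq_of_sum_eq_zero_of_norm_sub_eq {c c' : ι → E} (h0 : ∑ k, c k = 0)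
    (h0' : ∑ k, c' k = 0) (hd : ∀ i j, ‖c i - c j‖ = ‖c' i - c' j‖) (i : ι) :
    ‖c i‖ = ‖c' i‖ := by
  have hcard : (0 : ℝ) < Fintype.card ι := Nat.cast_pos.mpr (Fintype.card_pos_iff.mpr ⟨i⟩)
  have hrow : ∀ i, (Fintype.card ι : ℝ) * ‖c i‖ ^ 2 + ∑ j, ‖c j‖ ^ 2 =
      Fintype.card ι * ‖c' i‖ ^ 2 + ∑ j, ‖c' j‖ ^ 2 := fun i => by
    simp only [← sum_norm_sub_sq_of_sum_eq_zero h0, ← sum_norm_sub_sq_of_sum_eq_zero h0', hd]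
  have htotal : ∑ j, ‖c j‖ ^ 2 = ∑ j, ‖c' j‖ ^ 2 := by
    have := Finset.sum_congr rfl fun i (_ : i ∈ Finset.univ) => hrow i
    simp only [Finset.sum_add_distrib, ← Finset.mul_sum, Finset.sum_const, Finset.card_univ,
      nsmul_eq_mul] at this
    nlinarith
  have := hrow i
  rwa [htotal, add_left_inj, mul_right_inj' hcard.ne', sq_eq_sq₀ (norm_nonneg _) (norm_nonneg _)]
    at this

end Centered

theorem posVel_equiv_iff_dists_general (n : ℕ)
    (X V X' V' : Fin n → EuclideanSpace ℝ (Fin 3)) :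
    (∃ (τ : Equiv.Perm (Fin n))
       (R : EuclideanSpace ℝ (Fin 3) ≃ₗᵢ[ℝ] EuclideanSpace ℝ (Fin 3))
       (t : EuclideanSpace ℝ (Fin 3)),
       ∀ i, X' i = R (X (τ i)) + t ∧ V' i = R (V (τ i))) ↔
    (∃ τ : Equiv.Perm (Fin n), ∀ i j,
      ‖(X i - (n : ℝ)⁻¹ • ∑ k, X k) - (X j - (n : ℝ)⁻¹ • ∑ k, X k)‖ =
        ‖(X' (τ i) - (n : ℝ)⁻¹ • ∑ k, X' k) - (X' (τ j) - (n : ℝ)⁻¹ • ∑ k, X' k)‖ ∧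
      ‖(X i - (n : ℝ)⁻¹ • ∑ k, X k) - V j‖ =
        ‖(X' (τ i) - (n : ℝ)⁻¹ • ∑ k, X' k) - V' (τ j)‖ ∧
      ‖V i - V j‖ = ‖V' (τ i) - V' (τ j)‖ ∧
      ‖V i‖ = ‖V' (τ i)‖) := by
  have hb (Y : Fin n → EuclideanSpace ℝ (Fin 3)) : (n : ℝ)⁻¹ • ∑ k, Y k = barycenter Y := by
    rw [barycenter, Fintype.card_fin]
  simp only [hb]
  constructor
  · rintro ⟨σ, R, t, h⟩
    refine ⟨σ.symm, fun i j => ?_⟩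
    have : Nonempty (Fin n) := ⟨i⟩
    have hX : barycenter X' = R (barycenter X) + t := by
      rw [show X' = fun k => (R ∘ X ∘ σ) k + t from funext fun k => (h k).1,
        barycenter_add_const, barycenter_map, barycenter_comp_equiv]
    have hc (k) : X' (σ.symm k) - barycenter X' = R (X k - barycenter X) := by
      rw [(h _).1, hX, map_sub, Equiv.apply_symm_apply, add_sub_add_right_eq_sub]
    have hV (k) : V' (σ.symm k) = R (V k) := by rw [(h _).2, Equiv.apply_symm_apply]
    simp only [hc, hV, ← map_sub, LinearIsometryEquiv.norm_map, and_self]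
  · rintro ⟨τ, h⟩
    have hnorm : ∀ i, ‖X i - barycenter X‖ = ‖X' (τ i) - barycenter X'‖ :=
      norm_eq_of_sum_eq_zero_of_norm_sub_eq (sum_sub_barycenter X)
        ((Equiv.sum_comp τ _).trans (sum_sub_barycenter X')) fun i j => (h i j).1
    obtain ⟨R, hR⟩ := exists_linearIsometryEquiv_of_norm_eq_of_norm_sub_eq
      (Sum.elim (fun i => X i - barycenter X) V)
      (Sum.elim (fun i => X' (τ i) - barycenter X') (V' ∘ τ))
      (by rintro (i | i) <;> simp [hnorm, (h i i).2.2.2])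
      (by
        rintro (i | i) (j | j)
        · exact (h i j).1
        · exact (h i j).2.1
        · simp only [Sum.elim_inl, Sum.elim_inr, Function.comp_apply]
          rw [norm_sub_rev, (h j i).2.1, norm_sub_rev]
        · exact (h i j).2.2.1)
    refine ⟨τ.symm, R, barycenter X' - R (barycenter X), fun i => ⟨?_, ?_⟩⟩
    · have := hR (Sum.inl (τ.symm i))
      simp only [Sum.elim_inl, map_sub, Equiv.apply_symm_apply] at this
      rw [← sub_add_cancel (X' i) (barycenter X'), ← this]
      abel
    · simpa using (hR (Sum.inr (τ.symm i))).symm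

/-- Two position-velocity configurations are related by a simultaneous permutation, a common
orthogonal transformation (applied to positions and velocities) and a translation (applied to
positions only) if and only if some permutation matches all centralized pairwise distances,
position-velocity cross distances, velocity pairwise distances and velocity norms. -/
theorem posVel_equiv_iff_dists (n : ℕ) (hn : 0 < n)
    (X V X' V' : Fin n → EuclideanSpace ℝ (Fin 3)) :
    (∃ (τ : Equiv.Perm (Fin n))
       (R : EuclideanSpace ℝ (Fin 3) ≃ₗᵢ[ℝ] EuclideanSpace ℝ (Fin 3))
       (t : EuclideanSpace ℝ (Fin 3)),
       ∀ i, X' i = R (X (τ i)) + t ∧ V' i = R (V (τ i))) ↔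
    (∃ τ : Equiv.Perm (Fin n), ∀ i j,
      ‖(X i - (n : ℝ)⁻¹ • ∑ k, X k) - (X j - (n : ℝ)⁻¹ • ∑ k, X k)‖ =
        ‖(X' (τ i) - (n : ℝ)⁻¹ • ∑ k, X' k) - (X' (τ j) - (n : ℝ)⁻¹ • ∑ k, X' k)‖ ∧
      ‖(X i - (n : ℝ)⁻¹ • ∑ k, X k) - V j‖ =
        ‖(X' (τ i) - (n : ℝ)⁻¹ • ∑ k, X' k) - V' (τ j)‖ ∧
      ‖V i - V j‖ = ‖V' (τ i) - V' (τ j)‖ ∧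
      ‖V i‖ = ‖V' (τ i)‖) :=
  posVel_equiv_iff_dists_general n X V X' V'
end

section
/- Let f̃ : [n] × [n] × (ℝ^{3×n})² → ℝ satisfy the covariance property f̃^{τ(i)}_{τ(t)}(τX, τV) = f̃^i_t(X,V) for all τ ∈ S_n. Then there exist a function f of the data (x_i, v_i) and the multiset {{(x_k, v_k) : k ≠ i}}, invariant to permutations of the remaining n−1 columns, with f̃^i_i(X,V) = f(x_i, v_i, X_{∖i}, V_{∖i}), and a function g of ((x_i,v_i),(x_t,v_t)) and the multiset of remaining n−2 columns, invariant to permutations of those columns, with f̃^i_t(X,V) = g((x_i,v_i),(x_t,v_t), X_{∖i,t}, V_{∖i,t}) for t ≠ i. -/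
/-!
Two configurations with the same distinguished column(s) and the same multiset of remaining
columns differ by a permutation of the columns taking the distinguished indices of one to those
of the other (first match the full multisets of columns, then correct by swaps of equal columns).
Covariance makes the coefficient agree on the two, so it factors through the map sending a
configuration to its distinguished column(s) and the multiset of the rest.
-/

open Finset Equiv Function

section PermOfMultiset

variable {ι α : Type*}

theorem map_val_eq_cons_map_erase [DecidableEq ι] (f : ι → α) {s : Finset ι} {i : ι}
    (hi : i ∈ s) : s.val.map f = f i ::ₘ (s.erase i).val.map f := by
  rw [erase_val, ← Multiset.map_cons, Multiset.cons_erase (mem_val.mpr hi)]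

variable [Fintype ι]

theorem exists_perm_comp_eq_of_map_univ_eq {f g : ι → α}
    (h : univ.val.map f = univ.val.map g) : ∃ σ : Perm ι, f ∘ σ = g := by
  classical
  have hcard (c : α) : Fintype.card {k // g k = c} = Fintype.card {k // f k = c} := by
    have hcount := congrArg (Multiset.count c) h.symm
    rw [Multiset.count_map, Multiset.count_map] at hcount
    simpa [Fintype.card_subtype, card_def, filter_val, eq_comm] using hcount
  exact ⟨ofFiberEquiv fun c => Fintype.equivOfCardEq (hcard c),
    funext (ofFiberEquiv_map _)⟩

variable [DecidableEq ι]

theorem exists_perm_comp_eq_of_map_erase_eq {f g : ι → α} {i j : ι} (hij : f i = g j)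
    (h : (univ.erase i).val.map f = (univ.erase j).val.map g) :
    ∃ σ : Perm ι, σ j = i ∧ f ∘ σ = g := by
  obtain ⟨σ, hσ⟩ := exists_perm_comp_eq_of_map_univ_eq (f := f) (g := g) (by
    rw [map_val_eq_cons_map_erase f (mem_univ i), map_val_eq_cons_map_erase g (mem_univ j),
      hij, h])
  have hσj : f (σ j) = f i := (congrFun hσ j).trans hij.symm
  refine ⟨σ.trans (swap (σ j) i), swap_apply_left _ _, funext fun k => ?_⟩
  rw [comp_apply, trans_apply, apply_swap_eq_self hσj, ← comp_apply (f := f), hσ]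

theorem exists_perm_comp_eq_of_map_erase_erase_eq {f g : ι → α} {i t j s : ι}
    (hti : t ≠ i) (hsj : s ≠ j) (hij : f i = g j) (hts : f t = g s)
    (h : ((univ.erase i).erase t).val.map f = ((univ.erase j).erase s).val.map g) :
    ∃ σ : Perm ι, σ j = i ∧ σ s = t ∧ f ∘ σ = g := by
  obtain ⟨σ, hσj, hσ⟩ := exists_perm_comp_eq_of_map_erase_eq (f := f) (g := g) hij (by
    rw [map_val_eq_cons_map_erase f (mem_erase.mpr ⟨hti, mem_univ t⟩),
      map_val_eq_cons_map_erase g (mem_erase.mpr ⟨hsj, mem_univ s⟩), hts, h])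
  have hσs : f (σ s) = f t := (congrFun hσ s).trans hts.symm
  have hσsi : σ s ≠ i := hσj ▸ σ.injective.ne hsj
  refine ⟨σ.trans (swap (σ s) t), ?_, swap_apply_left _ _, funext fun k => ?_⟩
  · rw [trans_apply, hσj, swap_apply_of_ne_of_ne hσsi.symm hti.symm]
  · rw [comp_apply, trans_apply, apply_swap_eq_self hσs, ← comp_apply (f := f), hσ]

end PermOfMultiset

section Covariant

variable {ι α β : Type*}

def IsPermCovariant (F : ι → ι → (ι → α) → β) : Prop :=
  ∀ (τ : Perm ι) i t Z, F (τ i) (τ t) (fun k => Z (τ⁻¹ k)) = F i t Z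

variable {F : ι → ι → (ι → α) → β}

theorem IsPermCovariant.apply_perm_eq {Z W : ι → α} {σ : Perm ι} (hF : IsPermCovariant F)
    (hσ : Z ∘ σ = W) (j s : ι) : F (σ j) (σ s) Z = F j s W := by
  subst hσ
  simpa using hF σ j s (Z ∘ σ)

variable [Fintype ι] [DecidableEq ι]

theorem IsPermCovariant.apply_self_eq_of_map_erase_eq {Z W : ι → α} {i j : ι}
    (hF : IsPermCovariant F) (hij : Z i = W j)
    (h : (univ.erase i).val.map Z = (univ.erase j).val.map W) :
    F i i Z = F j j W := by
  obtain ⟨σ, hσj, hσ⟩ := exists_perm_comp_eq_of_map_erase_eq hij h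
  simpa only [hσj] using hF.apply_perm_eq hσ j j

theorem IsPermCovariant.apply_eq_of_map_erase_erase_eq {Z W : ι → α} {i t j s : ι}
    (hF : IsPermCovariant F) (hti : t ≠ i) (hsj : s ≠ j) (hij : Z i = W j) (hts : Z t = W s)
    (h : ((univ.erase i).erase t).val.map Z = ((univ.erase j).erase s).val.map W) :
    F i t Z = F j s W := by
  obtain ⟨σ, hσj, hσs, hσ⟩ := exists_perm_comp_eq_of_map_erase_erase_eq hti hsj hij hts h
  simpa only [hσj, hσs] using hF.apply_perm_eq hσ j s

variable [Nonempty β]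

theorem IsPermCovariant.exists_apply_self_eq_multiset_fun (hF : IsPermCovariant F) :
    ∃ f : α → Multiset α → β, ∀ i Z, F i i Z = f (Z i) ((univ.erase i).val.map Z) := by
  have hfac : FactorsThrough (fun d : ι × (ι → α) => F d.1 d.1 d.2)
      (fun d => (d.2 d.1, (univ.erase d.1).val.map d.2)) := fun a b hab =>
    hF.apply_self_eq_of_map_erase_eq (Prod.ext_iff.mp hab).1 (Prod.ext_iff.mp hab).2
  obtain ⟨e, he⟩ := (factorsThrough_iff _).mp hfac
  exact ⟨fun p m => e (p, m), fun i Z => congrFun he (i, Z)⟩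

theorem IsPermCovariant.exists_apply_eq_multiset_fun_of_ne (hF : IsPermCovariant F) :
    ∃ g : α → α → Multiset α → β, ∀ i t Z, t ≠ i →
      F i t Z = g (Z i) (Z t) (((univ.erase i).erase t).val.map Z) := by
  have hfac : FactorsThrough
      (fun d : {d : ι × ι × (ι → α) // d.2.1 ≠ d.1} => F d.1.1 d.1.2.1 d.1.2.2)
      (fun d => (d.1.2.2 d.1.1, d.1.2.2 d.1.2.1,
        ((univ.erase d.1.1).erase d.1.2.1).val.map d.1.2.2)) := fun a b hab => by
    simp only [Prod.mk.injEq] at hab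
    exact hF.apply_eq_of_map_erase_erase_eq a.2 b.2 hab.1 hab.2.1 hab.2.2
  obtain ⟨e, he⟩ := (factorsThrough_iff _).mp hfac
  exact ⟨fun p q m => e (p, q, m), fun i t Z h => congrFun he ⟨(i, t, Z), h⟩⟩

end Covariant

/-- A doubly-indexed family of coefficient functions satisfying the `S_n`-covariance property
`f̃^{τ(i)}_{τ(t)}(τX,τV) = f̃ⁱₜ(X,V)` is, on the diagonal, a function of `(xᵢ,vᵢ)` and the
multiset of the remaining columns, and off the diagonal a function of `(xᵢ,vᵢ)`, `(xₜ,vₜ)` and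
the multiset of the remaining columns. -/
theorem covariant_coeffs_are_multiset_functions (n : ℕ)
    (ft : Fin n → Fin n →
      (Fin n → EuclideanSpace ℝ (Fin 3)) × (Fin n → EuclideanSpace ℝ (Fin 3)) → ℝ)
    (hcov : ∀ (τ : Equiv.Perm (Fin n)) (i t : Fin n) X V,
      ft (τ i) (τ t) (fun k => X (τ⁻¹ k), fun k => V (τ⁻¹ k)) = ft i t (X, V)) :
    ∃ (f : (EuclideanSpace ℝ (Fin 3) × EuclideanSpace ℝ (Fin 3)) →
          Multiset (EuclideanSpace ℝ (Fin 3) × EuclideanSpace ℝ (Fin 3)) → ℝ)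
      (g : (EuclideanSpace ℝ (Fin 3) × EuclideanSpace ℝ (Fin 3)) →
          (EuclideanSpace ℝ (Fin 3) × EuclideanSpace ℝ (Fin 3)) →
          Multiset (EuclideanSpace ℝ (Fin 3) × EuclideanSpace ℝ (Fin 3)) → ℝ),
      (∀ (i : Fin n) X V, ft i i (X, V) =
        f (X i, V i) ((Finset.univ.erase i).val.map (fun k => (X k, V k)))) ∧
      (∀ (i t : Fin n) X V, t ≠ i → ft i t (X, V) =
        g (X i, V i) (X t, V t)
          (((Finset.univ.erase i).erase t).val.map (fun k => (X k, V k)))) := by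
  have hF : IsPermCovariant
      fun i t (Z : Fin n → EuclideanSpace ℝ (Fin 3) × EuclideanSpace ℝ (Fin 3)) =>
        ft i t (Prod.fst ∘ Z, Prod.snd ∘ Z) :=
    fun τ i t Z => hcov τ i t (Prod.fst ∘ Z) (Prod.snd ∘ Z)
  obtain ⟨f, hf⟩ := hF.exists_apply_self_eq_multiset_fun
  obtain ⟨g, hg⟩ := hF.exists_apply_eq_multiset_fun_of_ne
  exact ⟨f, g, fun i X V => hf i fun k => (X k, V k), fun i t X V => hg i t fun k => (X k, V k)⟩
end

section
/- Every continuous function Φ : ℝ^{3×n} → ℝ that is invariant under simultaneous O(3) rotation, translation, and permutation of the n points factors through the map sending X to the equivalence class of its centralized pairwise-distance matrix: if D(X) = D(X') as multisets of rows/columns up to simultaneous permutation, where D(X)_{ij} = ‖x_i − x_j‖, then Φ(X) = Φ(X'). Conversely, any function of the pairwise-distance matrix that is invariant to simultaneous row-column permutation induces a well-defined O(3)-, translation-, and permutation-invariant function on point clouds. -/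
/-!
Equal pairwise distances determine, by polarization, the Gram matrix of the differences
`x i - x k` from a base point `x k`. Two families `u`, `v` with equal Gram matrices are related by
a linear isometry: `∑ c i • u i ↦ ∑ c i • v i` is well defined and norm-preserving on the span of
`u`, and extends to the whole (finite-dimensional) space. So distance-equivalent point clouds
differ by a rigid motion followed by a relabelling, which `Φ` does not see. Conversely, a rigid
motion preserves all distances, and relabelling the points permutes the rows and columns of the
distance matrix simultaneously.
-/
lemma LinearMap.exists_linearIsometry_range_comp_eq {R W V V' : Type*} [Ring R] [AddCommGroup W]
    [Module R W] [SeminormedAddCommGroup V] [Module R V] [NormedAddCommGroup V'] [Module R V']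
    (T : W →ₗ[R] V) (T' : W →ₗ[R] V') (h : ∀ w, ‖T w‖ = ‖T' w‖) :
    ∃ f : LinearMap.range T →ₗᵢ[R] V', ∀ w, f ⟨T w, LinearMap.mem_range_self T w⟩ = T' w := by
  have hker : LinearMap.ker T ≤ LinearMap.ker T' := fun w hw => by
    rw [LinearMap.mem_ker, ← norm_eq_zero, ← h, LinearMap.mem_ker.mp hw, norm_zero]
  let f : LinearMap.range T →ₗ[R] V' :=
    (LinearMap.ker T).liftQ T' hker ∘ₗ T.quotKerEquivRange.symm.toLinearMap
  have hf : ∀ w, f ⟨T w, LinearMap.mem_range_self T w⟩ = T' w := fun w => by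
    simp [f, LinearMap.quotKerEquivRange_symm_apply_image]
  refine ⟨⟨f, ?_⟩, hf⟩
  rintro ⟨_, w, rfl⟩
  rw [hf, ← h]
  rfl

lemma norm_linearCombination_eq_of_inner_eq {𝕜 V ι : Type*} [RCLike 𝕜] [Fintype ι]
    [SeminormedAddCommGroup V] [InnerProductSpace 𝕜 V] {u v : ι → V}
    (h : ∀ i j, inner 𝕜 (u i) (u j) = inner 𝕜 (v i) (v j)) (c : ι → 𝕜) :
    ‖Fintype.linearCombination 𝕜 u c‖ = ‖Fintype.linearCombination 𝕜 v c‖ := by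
  have hsq :
      (‖Fintype.linearCombination 𝕜 u c‖ ^ 2 : 𝕜) = ‖Fintype.linearCombination 𝕜 v c‖ ^ 2 := by
    simp only [← inner_self_eq_norm_sq_to_K, Fintype.linearCombination_apply, inner_sum, sum_inner,
      inner_smul_left, inner_smul_right, h]
  exact (sq_eq_sq₀ (norm_nonneg _) (norm_nonneg _)).mp (mod_cast hsq)

lemma exists_linearIsometryEquiv_of_inner_eq_s11 {𝕜 V ι : Type*} [RCLike 𝕜] [Fintype ι]
    [NormedAddCommGroup V] [InnerProductSpace 𝕜 V] [FiniteDimensional 𝕜 V] {u v : ι → V}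
    (h : ∀ i j, inner 𝕜 (u i) (u j) = inner 𝕜 (v i) (v j)) :
    ∃ L : V ≃ₗᵢ[𝕜] V, ∀ i, L (u i) = v i := by
  classical
  obtain ⟨f, hf⟩ := LinearMap.exists_linearIsometry_range_comp_eq _ _
    (norm_linearCombination_eq_of_inner_eq h)
  refine ⟨f.extend.toLinearIsometryEquiv rfl, fun i => ?_⟩
  have hu := Fintype.linearCombination_apply_single 𝕜 u i (1 : 𝕜)
  have hv := Fintype.linearCombination_apply_single 𝕜 v i (1 : 𝕜)
  rw [one_smul] at hu hv
  rw [LinearIsometry.toLinearIsometryEquiv_apply, ← hv, ← hf, ← LinearIsometry.extend_apply]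
  simp only [hu]

lemma real_inner_sub_sub_eq_of_norm_sub_eq {V V' ι : Type*} [SeminormedAddCommGroup V]
    [InnerProductSpace ℝ V] [SeminormedAddCommGroup V'] [InnerProductSpace ℝ V'] {X : ι → V}
    {Y : ι → V'} (h : ∀ i j, ‖X i - X j‖ = ‖Y i - Y j‖) (k i j : ι) :
    inner ℝ (X i - X k) (X j - X k) = inner ℝ (Y i - Y k) (Y j - Y k) := by
  have hX := norm_sub_sq_real (X i - X k) (X j - X k)
  have hY := norm_sub_sq_real (Y i - Y k) (Y j - Y k)
  rw [sub_sub_sub_cancel_right] at hX hY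
  rw [h i j, h i k, h j k] at hX
  linarith

lemma exists_linearIsometryEquiv_add_of_norm_sub_eq {V ι : Type*} [Fintype ι]
    [NormedAddCommGroup V] [InnerProductSpace ℝ V] [FiniteDimensional ℝ V] {X Y : ι → V}
    (h : ∀ i j, ‖X i - X j‖ = ‖Y i - Y j‖) :
    ∃ (R : V ≃ₗᵢ[ℝ] V) (t : V), ∀ i, Y i = R (X i) + t := by
  rcases isEmpty_or_nonempty ι with _ | ⟨⟨k⟩⟩
  · exact ⟨LinearIsometryEquiv.refl ℝ V, 0, isEmptyElim⟩
  obtain ⟨R, hR⟩ := exists_linearIsometryEquiv_of_inner_eq_s11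
    (real_inner_sub_sub_eq_of_norm_sub_eq h k)
  refine ⟨R, Y k - R (X k), fun i => ?_⟩
  have hRi := hR i
  rw [map_sub, sub_eq_iff_eq_add] at hRi
  rw [hRi]
  abel

/-- A continuous function on 3D point clouds invariant to rotations, translations and
permutations factors through the pairwise-distance matrix up to simultaneous permutation;
conversely, any simultaneous-permutation-invariant function of the pairwise-distance matrix
induces a rotation-, translation- and permutation-invariant function on point clouds. -/
theorem invariant_factors_through_distance_matrix (n : ℕ) :
    (∀ Φ : (Fin n → EuclideanSpace ℝ (Fin 3)) → ℝ, Continuous Φ →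
      (∀ (τ : Equiv.Perm (Fin n))
         (R : EuclideanSpace ℝ (Fin 3) ≃ₗᵢ[ℝ] EuclideanSpace ℝ (Fin 3))
         (t : EuclideanSpace ℝ (Fin 3)) (X : Fin n → EuclideanSpace ℝ (Fin 3)),
         Φ (fun i => R (X (τ i)) + t) = Φ X) →
      ∀ X X' : Fin n → EuclideanSpace ℝ (Fin 3),
        (∃ τ : Equiv.Perm (Fin n), ∀ i j, ‖X i - X j‖ = ‖X' (τ i) - X' (τ j)‖) →
        Φ X = Φ X') ∧
    (∀ F : (Fin n → Fin n → ℝ) → ℝ,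
      (∀ (τ : Equiv.Perm (Fin n)) (D : Fin n → Fin n → ℝ),
        F (fun i j => D (τ i) (τ j)) = F D) →
      ∀ (τ : Equiv.Perm (Fin n))
        (R : EuclideanSpace ℝ (Fin 3) ≃ₗᵢ[ℝ] EuclideanSpace ℝ (Fin 3))
        (t : EuclideanSpace ℝ (Fin 3)) (X : Fin n → EuclideanSpace ℝ (Fin 3)),
        F (fun i j => ‖(R (X (τ i)) + t) - (R (X (τ j)) + t)‖) =
          F (fun i j => ‖X i - X j‖)) := by
  refine ⟨fun Φ _ hΦ X X' ⟨τ, hτ⟩ => ?_, fun F hF τ R t X => ?_⟩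
  · obtain ⟨R, t, hRt⟩ := exists_linearIsometryEquiv_add_of_norm_sub_eq hτ
    calc Φ X = Φ (fun i => R (X ((1 : Equiv.Perm (Fin n)) i)) + t) := (hΦ 1 R t X).symm
      _ = Φ (fun i => LinearIsometryEquiv.refl ℝ _ (X' (τ i)) + 0) := by
        simp only [Equiv.Perm.one_apply, LinearIsometryEquiv.coe_refl, id_eq, add_zero, hRt]
      _ = Φ X' := hΦ τ _ 0 X'
  · simp only [add_sub_add_right_eq_sub, ← map_sub, LinearIsometryEquiv.norm_map]
    exact hF τ (fun i j => ‖X i - X j‖)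
end

section
/- Let S ⊂ ℝ^d be a finite set with AffineDim(S) = d and barycenter b, and fix two points x_i, x_j ∈ S with AffineDim({b, x_i, x_j}) = 2. Among all x_k ∈ S with AffineDim({b, x_i, x_j, x_k}) = 3, let x_k minimize the solid angle of Cone(x_i − b, x_j − b, x_k − b). Then no point x ∈ S satisfies x − b ∈ Interior(Cone(x_i − b, x_j − b, x_k − b)). -/
/-!
With `u = xi - b`, `v = xj - b`, `w = xk - b` (a basis, as `{b, xi, xj, xk}` is affinely
independent), a point `y = x - b` interior to `Cone(u, v, w)` has three positive coordinates
`(y₀, y₁, y₂)`. Hence `u, v, y` is again a basis, so `x` competes in the minimisation, and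
`Cone(u, v, y) ⊆ Cone(u, v, w)`. The inclusion loses volume: a small multiple of
`y - (y₀ / 2) • u` is interior to `Cone(u, v, w)` and inside the unit ball, but has a negative
`u`-coordinate with respect to `u, v, y`, so a whole ball around it misses the closed cone
`Cone(u, v, y)`. Thus `Cone(u, v, y)` has strictly smaller solid angle than the minimal cone.
-/

/-- The cone generated by three vectors in `ℝ³`. -/
def cone13 (u₁ u₂ u₃ : EuclideanSpace ℝ (Fin 3)) : Set (EuclideanSpace ℝ (Fin 3)) :=
  {x | ∃ a b c : ℝ, 0 ≤ a ∧ 0 ≤ b ∧ 0 ≤ c ∧ x = a • u₁ + b • u₂ + c • u₃}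

open Module Set MeasureTheory Metric

theorem vectorSpan_insert_eq_span_range_sub {k V : Type*} [Ring k] [AddCommGroup V]
    [Module k V] (b p q r : V) :
    vectorSpan k ({b, p, q, r} : Set V) = Submodule.span k (range ![p - b, q - b, r - b]) := by
  rw [vectorSpan_eq_span_vsub_set_right k (mem_insert b _)]
  simp only [image_insert_eq, image_singleton, vsub_eq_sub, sub_self, Submodule.span_insert_zero,
    Matrix.range_cons, Matrix.range_empty, union_empty, singleton_union]

theorem finrank_vectorSpan_insert_eq_three_iff {k V : Type*} [DivisionRing k] [AddCommGroup V]
    [Module k V] (b p q r : V) :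
    finrank k (vectorSpan k ({b, p, q, r} : Set V)) = 3 ↔
      LinearIndependent k ![p - b, q - b, r - b] := by
  rw [vectorSpan_insert_eq_span_range_sub, linearIndependent_iff_card_eq_finrank_span,
    Fintype.card_fin, eq_comm]
  rfl

section Orthant

variable {ι F : Type*} [Fintype ι] [NormedAddCommGroup F] [NormedSpace ℝ F]
  [FiniteDimensional ℝ F] (B : Basis ι ℝ F)

theorem Module.Basis.setOf_repr_nonneg_eq_preimage :
    {z | ∀ i, 0 ≤ B.repr z i} =
      B.equivFun.toContinuousLinearEquiv ⁻¹' univ.pi fun _ => Ici 0 := by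
  ext; simp [Basis.equivFun_apply, Pi.le_def]

theorem Module.Basis.isClosed_setOf_repr_nonneg : IsClosed {z | ∀ i, 0 ≤ B.repr z i} := by
  rw [B.setOf_repr_nonneg_eq_preimage]
  exact (isClosed_set_pi fun _ _ => isClosed_Ici).preimage (ContinuousLinearEquiv.continuous _)

theorem Module.Basis.interior_setOf_repr_nonneg :
    interior {z | ∀ i, 0 ≤ B.repr z i} = {z | ∀ i, 0 < B.repr z i} := by
  rw [B.setOf_repr_nonneg_eq_preimage, ← ContinuousLinearEquiv.coe_toHomeomorph,
    ← Homeomorph.preimage_interior, interior_pi_set finite_univ]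
  ext; simp [Basis.equivFun_apply]

end Orthant

theorem measure_lt_measure_of_mem_interior_diff {X : Type*} [TopologicalSpace X]
    [MeasurableSpace X] [OpensMeasurableSpace X] (μ : Measure X) [μ.IsOpenPosMeasure]
    {A B : Set X} (hAB : A ⊆ B) (hA : IsClosed A) (hμA : μ A ≠ ⊤) {p : X}
    (hpB : p ∈ interior B) (hpA : p ∉ A) : μ A < μ B := by
  set U := interior B \ A
  have hU_open : IsOpen U := isOpen_interior.sdiff hA
  have hU : 0 < μ U := hU_open.measure_pos μ ⟨p, hpB, hpA⟩
  calc μ A < μ A + μ U := ENNReal.lt_add_right hμA hU.ne'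
    _ = μ (A ∪ U) := (measure_union disjoint_sdiff_right hU_open.measurableSet).symm
    _ ≤ μ B := measure_mono (union_subset hAB (sdiff_subset.trans interior_subset))

local notation "E" => EuclideanSpace ℝ (Fin 3)

theorem Module.Basis.eq_sum_repr_three {R M : Type*} [Semiring R] [AddCommMonoid M]
    [Module R M] (B : Basis (Fin 3) R M) (z : M) :
    z = B.repr z 0 • B 0 + B.repr z 1 • B 1 + B.repr z 2 • B 2 := by
  rw [← Fin.sum_univ_three (fun i => B.repr z i • B i), B.sum_repr]

theorem cone13_eq_setOf_repr_nonneg (B : Basis (Fin 3) ℝ E) :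
    cone13 (B 0) (B 1) (B 2) = {z | ∀ i, 0 ≤ B.repr z i} := by
  ext z
  constructor
  · rintro ⟨a, b, c, ha, hb, hc, rfl⟩ i
    fin_cases i <;> simpa [Finsupp.single_apply]
  · intro hz
    exact ⟨B.repr z 0, B.repr z 1, B.repr z 2, hz 0, hz 1, hz 2, B.eq_sum_repr_three z⟩

theorem exists_basis_of_linearIndependent {u v w : E} (h : LinearIndependent ℝ ![u, v, w]) :
    ∃ B : Basis (Fin 3) ℝ E, B 0 = u ∧ B 1 = v ∧ B 2 = w := by
  have hB := coe_basisOfLinearIndependentOfCardEqFinrank h (by simp)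
  exact ⟨_, congrFun hB 0, congrFun hB 1, congrFun hB 2⟩

theorem cone13_subset_of_mem {u v w y : E} (hy : y ∈ cone13 u v w) :
    cone13 u v y ⊆ cone13 u v w := by
  obtain ⟨a, b, c, ha, hb, hc, rfl⟩ := hy
  rintro z ⟨α, β, γ, hα, hβ, hγ, rfl⟩
  exact ⟨α + γ * a, β + γ * b, γ * c, by positivity, by positivity, by positivity,
    by module⟩

theorem isClosed_cone13 {u v w : E} (h : LinearIndependent ℝ ![u, v, w]) :
    IsClosed (cone13 u v w) := by
  obtain ⟨B, rfl, rfl, rfl⟩ := exists_basis_of_linearIndependent h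
  rw [cone13_eq_setOf_repr_nonneg]
  exact B.isClosed_setOf_repr_nonneg

theorem linearIndependent_of_mem_interior_cone13 {u v w y : E}
    (h : LinearIndependent ℝ ![u, v, w]) (hy : y ∈ interior (cone13 u v w)) :
    LinearIndependent ℝ ![u, v, y] := by
  obtain ⟨B, rfl, rfl, rfl⟩ := exists_basis_of_linearIndependent h
  rw [cone13_eq_setOf_repr_nonneg, B.interior_setOf_repr_nonneg] at hy
  refine linearIndependent_of_top_le_span_of_card_eq_finrank ?_ (by simp)
  rw [← B.span_eq, Submodule.span_le]
  rintro _ ⟨i, rfl⟩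
  have hu : B 0 ∈ Submodule.span ℝ (range ![B 0, B 1, y]) := Submodule.subset_span ⟨0, rfl⟩
  have hv : B 1 ∈ Submodule.span ℝ (range ![B 0, B 1, y]) := Submodule.subset_span ⟨1, rfl⟩
  have hy' : y ∈ Submodule.span ℝ (range ![B 0, B 1, y]) := Submodule.subset_span ⟨2, rfl⟩
  fin_cases i
  · exact hu
  · exact hv
  · show B 2 ∈ _
    have hw : B.repr y 2 • B 2 = y - B.repr y 0 • B 0 - B.repr y 1 • B 1 := by
      linear_combination (norm := module) -B.eq_sum_repr_three y
    refine (Submodule.smul_mem_iff _ (hy 2).ne').1 ?_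
    rw [hw]
    exact sub_mem (sub_mem hy' (Submodule.smul_mem _ _ hu)) (Submodule.smul_mem _ _ hv)

theorem exists_mem_interior_cone13_notMem {u v w y : E}
    (h : LinearIndependent ℝ ![u, v, w]) (hy : y ∈ interior (cone13 u v w)) :
    ∃ p ∈ interior (cone13 u v w), p ∉ cone13 u v y ∧ ‖p‖ < 1 := by
  obtain ⟨B', h0, h1, rfl⟩ := exists_basis_of_linearIndependent
    (linearIndependent_of_mem_interior_cone13 h hy)
  obtain ⟨B, rfl, rfl, rfl⟩ := exists_basis_of_linearIndependent h
  rw [cone13_eq_setOf_repr_nonneg, B.interior_setOf_repr_nonneg] at hy ⊢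
  rw [← h0, ← h1, cone13_eq_setOf_repr_nonneg]
  -- if `B' 2` has `B`-coordinates `(y₀, y₁, y₂)`, then `z` has `B`-coordinates
  -- `(y₀ / 2, y₁, y₂)` and `B'`-coordinates `(-y₀ / 2, 0, 1)`
  set z := B' 2 - (B.repr (B' 2) 0 / 2) • B' 0
  obtain ⟨s, hs, hsz⟩ : ∃ s : ℝ, 0 < s ∧ ‖s • z‖ < 1 := by
    refine ⟨(‖z‖ + 1)⁻¹, by positivity, ?_⟩
    rw [norm_smul, Real.norm_of_nonneg (by positivity), inv_mul_lt_iff₀ (by positivity)]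
    linarith
  refine ⟨s • z, fun i => ?_, fun hz => ?_, hsz⟩
  · fin_cases i <;> simpa [z, h0, hs] using hy _
  · have hz0 : B'.repr (s • z) 0 = -(s * (B.repr (B' 2) 0 / 2)) := by simp [z]
    have := hy 0
    exact (hz 0).not_gt (hz0 ▸ neg_neg_of_pos (by positivity))

theorem volume_cone13_inter_closedBall_lt {u v w y : E}
    (h : LinearIndependent ℝ ![u, v, w]) (hy : y ∈ interior (cone13 u v w)) :
    volume (cone13 u v y ∩ closedBall 0 1) < volume (cone13 u v w ∩ closedBall 0 1) := by
  obtain ⟨p, hpK, hpK', hp⟩ := exists_mem_interior_cone13_notMem h hy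
  refine measure_lt_measure_of_mem_interior_diff volume
    (inter_subset_inter_left _ (cone13_subset_of_mem (interior_subset hy)))
    ((isClosed_cone13 (linearIndependent_of_mem_interior_cone13 h hy)).inter isClosed_closedBall)
    (measure_mono inter_subset_right |>.trans_lt measure_closedBall_lt_top).ne ?_ (hpK' ·.1)
  rw [interior_inter, interior_closedBall _ one_ne_zero]
  exact ⟨hpK, mem_ball_zero_iff.2 hp⟩

theorem minimal_angle_cone_empty_interior_general
    (S : Finset (EuclideanSpace ℝ (Fin 3)))
    (b : EuclideanSpace ℝ (Fin 3))
    (xi xj xk : EuclideanSpace ℝ (Fin 3))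
    (hk3 : Module.finrank ℝ
      (vectorSpan ℝ ({b, xi, xj, xk} : Set (EuclideanSpace ℝ (Fin 3)))) = 3)
    (hmin : ∀ x ∈ S, Module.finrank ℝ
        (vectorSpan ℝ ({b, xi, xj, x} : Set (EuclideanSpace ℝ (Fin 3)))) = 3 →
      MeasureTheory.volume (cone13 (xi - b) (xj - b) (xk - b) ∩ Metric.closedBall 0 1) ≤
      MeasureTheory.volume (cone13 (xi - b) (xj - b) (x - b) ∩ Metric.closedBall 0 1)) :
    ∀ x ∈ S, x - b ∉ interior (cone13 (xi - b) (xj - b) (xk - b)) := by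
  intro x hx hx_int
  have hind := (finrank_vectorSpan_insert_eq_three_iff b xi xj xk).1 hk3
  have hx3 := (finrank_vectorSpan_insert_eq_three_iff b xi xj x).2
    (linearIndependent_of_mem_interior_cone13 hind hx_int)
  exact (hmin x hx hx3).not_gt (volume_cone13_inter_closedBall_lt hind hx_int)

/-- Minimal-angle cone selection: if `x_k` minimizes the solid angle of the cone
`Cone(xᵢ−b, xⱼ−b, x−b)` among all points `x ∈ S` making `{b,xᵢ,xⱼ,x}` affinely
3-dimensional, then no point of `S` lies (relative to `b`) in the interior of the chosen cone. -/
theorem minimal_angle_cone_empty_interior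
    (S : Finset (EuclideanSpace ℝ (Fin 3))) (hS : S.Nonempty)
    (hdim : Module.finrank ℝ (vectorSpan ℝ (S : Set (EuclideanSpace ℝ (Fin 3)))) = 3)
    (b : EuclideanSpace ℝ (Fin 3)) (hb : b = (S.card : ℝ)⁻¹ • ∑ x ∈ S, x)
    (xi xj xk : EuclideanSpace ℝ (Fin 3))
    (hxi : xi ∈ S) (hxj : xj ∈ S) (hxk : xk ∈ S)
    (hij : Module.finrank ℝ
      (vectorSpan ℝ ({b, xi, xj} : Set (EuclideanSpace ℝ (Fin 3)))) = 2)
    (hk3 : Module.finrank ℝ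
      (vectorSpan ℝ ({b, xi, xj, xk} : Set (EuclideanSpace ℝ (Fin 3)))) = 3)
    (hmin : ∀ x ∈ S, Module.finrank ℝ
        (vectorSpan ℝ ({b, xi, xj, x} : Set (EuclideanSpace ℝ (Fin 3)))) = 3 →
      MeasureTheory.volume (cone13 (xi - b) (xj - b) (xk - b) ∩ Metric.closedBall 0 1) ≤
      MeasureTheory.volume (cone13 (xi - b) (xj - b) (x - b) ∩ Metric.closedBall 0 1)) :
    ∀ x ∈ S, x - b ∉ interior (cone13 (xi - b) (xj - b) (xk - b)) :=
  minimal_angle_cone_empty_interior_general S b xi xj xk hk3 hmin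
end

section
/- Let S ⊂ ℝ³ be a finite set of n points and b its barycenter. If there exist three points y₁, y₂, y₃ ∈ S such that AffineDim({b, y₁, y₂, y₃}) = AffineDim(S) and no point x ∈ S has x − b in the interior of Cone(y₁ − b, y₂ − b, y₃ − b) (when AffineDim(S) = 3), then S is uniquely determined up to orthogonal transformations fixing b by: the distance matrix of (b, y₁, y₂, y₃), together with, for each point x ∈ S, the tuple of distances (‖x − b‖, ‖x − y₁‖, ‖x − y₂‖, ‖x − y₃‖) given as a multiset over x ∈ S. -/
/-- The cone generated by three vectors in `ℝ³`. -/
def cone17 (u₁ u₂ u₃ : EuclideanSpace ℝ (Fin 3)) : Set (EuclideanSpace ℝ (Fin 3)) :=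
  {x | ∃ a b c : ℝ, 0 ≤ a ∧ 0 ≤ b ∧ 0 ≤ c ∧ x = a • u₁ + b • u₂ + c • u₃}

open scoped RealInnerProductSpace

/-- A point of the affine span of a set is determined by its distances to the set. -/
lemma eq_of_dist_eq_on_set17 {E : Type*} [NormedAddCommGroup E] [InnerProductSpace ℝ E]
    (T : Set E) (p q : E)
    (hp : p ∈ affineSpan ℝ T) (hq : q ∈ affineSpan ℝ T)
    (h : ∀ t ∈ T, ‖p - t‖ = ‖q - t‖) : p = q := by
  have key : ∀ t ∈ T, 2 * ⟪p, t⟫ - 2 * ⟪q, t⟫ = ‖p‖ ^ 2 - ‖q‖ ^ 2 := by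
    intro t ht
    have h1 : ‖p - t‖ ^ 2 = ‖q - t‖ ^ 2 := by rw [h t ht]
    rw [norm_sub_sq_real, norm_sub_sq_real] at h1
    linarith
  have horth : ∀ u ∈ vectorSpan ℝ T, ⟪p - q, u⟫ = 0 := by
    intro u hu
    rw [vectorSpan_def] at hu
    induction hu using Submodule.span_induction with
    | mem x hx =>
        obtain ⟨a, ha, c, hc, rfl⟩ := Set.mem_vsub.mp hx
        have k1 := key a ha; have k2 := key c hc
        rw [vsub_eq_sub]
        simp only [inner_sub_left, inner_sub_right]
        linarith
    | zero => simp
    | add x y _ _ hx hy => rw [inner_add_right, hx, hy]; ring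
    | smul a x _ hx => rw [inner_smul_right, hx]; ring
  have hmem : p - q ∈ vectorSpan ℝ T := by
    have := AffineSubspace.vsub_mem_direction hp hq
    rwa [direction_affineSpan, vsub_eq_sub] at this
  have hz : ⟪p - q, p - q⟫ = 0 := horth _ hmem
  exact sub_eq_zero.mp (inner_self_eq_zero.mp hz)

lemma inner_eq_of_norms17 {E : Type*} [NormedAddCommGroup E] [InnerProductSpace ℝ E]
    {x y x' y' : E} (h1 : ‖x‖ = ‖x'‖) (h2 : ‖y‖ = ‖y'‖) (h3 : ‖x - y‖ = ‖x' - y'‖) :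
    ⟪x, y⟫ = ⟪x', y'⟫ := by
  have e1 := norm_sub_sq_real x y
  have e2 := norm_sub_sq_real x' y'
  rw [h1, h2, h3] at e1
  linarith

lemma barycenter_mem_affineSpan17 (S : Finset (EuclideanSpace ℝ (Fin 3))) (hS : S.Nonempty) :
    (S.card : ℝ)⁻¹ • ∑ x ∈ S, x ∈ affineSpan ℝ (S : Set (EuclideanSpace ℝ (Fin 3))) := by
  have hne : Nonempty {x // x ∈ S} := ⟨⟨hS.choose, hS.choose_spec⟩⟩
  have h := centroid_mem_affineSpan_of_nonempty ℝ
    (fun x : {x // x ∈ S} => (x : EuclideanSpace ℝ (Fin 3))) (s := Finset.univ)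
    Finset.univ_nonempty
  have hrange : Set.range (fun x : {x // x ∈ S} => (x : EuclideanSpace ℝ (Fin 3)))
      = (S : Set (EuclideanSpace ℝ (Fin 3))) := by
    simp [Subtype.range_coe_subtype]
  rw [hrange] at h
  have hcent : Finset.centroid ℝ Finset.univ
      (fun x : {x // x ∈ S} => (x : EuclideanSpace ℝ (Fin 3)))
      = (S.card : ℝ)⁻¹ • ∑ x ∈ S, x := by
    rw [Finset.centroid_def,
      Finset.affineCombination_eq_linear_combination _ _ _
        (Finset.sum_centroidWeights_eq_one_of_nonempty ℝ _ Finset.univ_nonempty)]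
    rw [Finset.sum_congr rfl fun i _ => by rw [Finset.centroidWeights_apply], ← Finset.smul_sum]
    congr 1
    · simp
    · rw [← Finset.sum_coe_sort S (fun x => x)]
  rwa [hcent] at h

lemma exists_isometryEquiv_of_gram17 (v w : Fin 3 → EuclideanSpace ℝ (Fin 3))
    (h : ∀ i j, ⟪v i, v j⟫ = ⟪w i, w j⟫) :
    ∃ F : EuclideanSpace ℝ (Fin 3) ≃ₗᵢ[ℝ] EuclideanSpace ℝ (Fin 3), ∀ i, F (v i) = w i := by
  classical
  let T : (Fin 3 → ℝ) →ₗ[ℝ] EuclideanSpace ℝ (Fin 3) :=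
    { toFun := fun a => ∑ i, a i • v i
      map_add' := by intro a c; simp [add_smul, Finset.sum_add_distrib]
      map_smul' := by intro c a; simp [smul_smul, Finset.smul_sum] }
  let T' : (Fin 3 → ℝ) →ₗ[ℝ] EuclideanSpace ℝ (Fin 3) :=
    { toFun := fun a => ∑ i, a i • w i
      map_add' := by intro a c; simp [add_smul, Finset.sum_add_distrib]
      map_smul' := by intro c a; simp [smul_smul, Finset.smul_sum] }
  have hinner : ∀ a, ⟪T a, T a⟫ = ⟪T' a, T' a⟫ := by
    intro a
    simp only [T, T', LinearMap.coe_mk, AddHom.coe_mk, sum_inner, inner_sum,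
      real_inner_smul_left, real_inner_smul_right]
    exact Finset.sum_congr rfl fun i _ => Finset.sum_congr rfl fun j _ => by rw [h j i]
  have hnorm : ∀ a, ‖T a‖ = ‖T' a‖ := by
    intro a
    have h2 := hinner a
    rw [real_inner_self_eq_norm_sq, real_inner_self_eq_norm_sq] at h2
    rw [← Real.sqrt_sq (norm_nonneg (T a)), ← Real.sqrt_sq (norm_nonneg (T' a)), h2]
  have hker : LinearMap.ker T ≤ LinearMap.ker T' := by
    intro a ha
    rw [LinearMap.mem_ker] at ha ⊢
    have h2 := hnorm a
    rw [ha, norm_zero] at h2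
    exact norm_eq_zero.mp h2.symm
  let L0 : LinearMap.range T →ₗ[ℝ] EuclideanSpace ℝ (Fin 3) :=
    (Submodule.liftQ (LinearMap.ker T) T' hker).comp
      (T.quotKerEquivRange.symm.toLinearMap)
  have hL0 : ∀ a : Fin 3 → ℝ, L0 ⟨T a, LinearMap.mem_range_self T a⟩ = T' a := by
    intro a
    show (Submodule.liftQ (LinearMap.ker T) T' hker)
      (T.quotKerEquivRange.symm ⟨T a, LinearMap.mem_range_self T a⟩) = T' a
    rw [LinearMap.quotKerEquivRange_symm_apply_image]
    rfl
  have hL0norm : ∀ x : LinearMap.range T, ‖L0 x‖ = ‖x‖ := by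
    rintro ⟨x, hx⟩
    obtain ⟨a, rfl⟩ := hx
    rw [hL0 a, ← hnorm]
    rfl
  let L : LinearMap.range T →ₗᵢ[ℝ] EuclideanSpace ℝ (Fin 3) := ⟨L0, hL0norm⟩
  let F1 : EuclideanSpace ℝ (Fin 3) →ₗᵢ[ℝ] EuclideanSpace ℝ (Fin 3) := L.extend
  let F : EuclideanSpace ℝ (Fin 3) ≃ₗᵢ[ℝ] EuclideanSpace ℝ (Fin 3) :=
    LinearIsometryEquiv.ofSurjective F1
      (LinearMap.surjective_of_injective F1.injective)
  refine ⟨F, fun i => ?_⟩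
  have hv : v i = T (Pi.single i 1) := by simp [T, Pi.single_apply]
  have hw : w i = T' (Pi.single i 1) := by simp [T', Pi.single_apply]
  have hFF1 : F (v i) = F1 (v i) := rfl
  rw [hFF1, hv]
  have hmem : T (Pi.single i 1) ∈ LinearMap.range T := LinearMap.mem_range_self T _
  have hext := L.extend_apply ⟨T (Pi.single i 1), hmem⟩
  rw [show ((⟨T (Pi.single i 1), hmem⟩ : LinearMap.range T) : EuclideanSpace ℝ (Fin 3))
      = T (Pi.single i 1) from rfl] at hext
  rw [hext, show L ⟨T (Pi.single i 1), hmem⟩ = T' (Pi.single i 1) from hL0 _, ← hw]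

/-- Correctness of reconstruction from an enhanced profile: two finite sets `S, S' ⊂ ℝ³`
whose distinguished triples (together with the barycenter) realize the full affine dimension,
satisfy the cone condition in the 3-dimensional case, have the same distance matrix of
`(b, y₁, y₂, y₃)`, and have equal multisets of distance tuples to these four points, are
related by an orthogonal transformation about the barycenter. -/
theorem reconstruction_from_enhanced_profile
    (S S' : Finset (EuclideanSpace ℝ (Fin 3))) (hS : S.Nonempty) (hS' : S'.Nonempty)
    (b b' : EuclideanSpace ℝ (Fin 3))
    (hb : b = (S.card : ℝ)⁻¹ • ∑ x ∈ S, x)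
    (hb' : b' = (S'.card : ℝ)⁻¹ • ∑ x ∈ S', x)
    (y₁ y₂ y₃ : EuclideanSpace ℝ (Fin 3))
    (hy₁ : y₁ ∈ S) (hy₂ : y₂ ∈ S) (hy₃ : y₃ ∈ S)
    (y₁' y₂' y₃' : EuclideanSpace ℝ (Fin 3))
    (hy₁' : y₁' ∈ S') (hy₂' : y₂' ∈ S') (hy₃' : y₃' ∈ S')
    (hspan : Module.finrank ℝ
        (vectorSpan ℝ ({b, y₁, y₂, y₃} : Set (EuclideanSpace ℝ (Fin 3)))) =
      Module.finrank ℝ (vectorSpan ℝ (S : Set (EuclideanSpace ℝ (Fin 3)))))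
    (hspan' : Module.finrank ℝ
        (vectorSpan ℝ ({b', y₁', y₂', y₃'} : Set (EuclideanSpace ℝ (Fin 3)))) =
      Module.finrank ℝ (vectorSpan ℝ (S' : Set (EuclideanSpace ℝ (Fin 3)))))
    (hcone : Module.finrank ℝ (vectorSpan ℝ (S : Set (EuclideanSpace ℝ (Fin 3)))) = 3 →
      ∀ x ∈ S, x - b ∉ interior (cone17 (y₁ - b) (y₂ - b) (y₃ - b)))
    (hcone' : Module.finrank ℝ (vectorSpan ℝ (S' : Set (EuclideanSpace ℝ (Fin 3)))) = 3 →
      ∀ x ∈ S', x - b' ∉ interior (cone17 (y₁' - b') (y₂' - b') (y₃' - b')))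
    (hdistmat : ∀ u v : Fin 4,
      ‖![b, y₁, y₂, y₃] u - ![b, y₁, y₂, y₃] v‖ =
        ‖![b', y₁', y₂', y₃'] u - ![b', y₁', y₂', y₃'] v‖)
    (hprof : S.val.map (fun x => (‖x - b‖, ‖x - y₁‖, ‖x - y₂‖, ‖x - y₃‖)) =
      S'.val.map (fun x => (‖x - b'‖, ‖x - y₁'‖, ‖x - y₂'‖, ‖x - y₃'‖))) :
    ∃ R : EuclideanSpace ℝ (Fin 3) ≃ₗᵢ[ℝ] EuclideanSpace ℝ (Fin 3),
      (S' : Set (EuclideanSpace ℝ (Fin 3))) =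
        (fun x => b' + R (x - b)) '' (S : Set (EuclideanSpace ℝ (Fin 3))) := by
  classical
  -- norm equalities from the distance matrix
  have hn1 : ‖y₁ - b‖ = ‖y₁' - b'‖ := by simpa using hdistmat 1 0
  have hn2 : ‖y₂ - b‖ = ‖y₂' - b'‖ := by simpa using hdistmat 2 0
  have hn3 : ‖y₃ - b‖ = ‖y₃' - b'‖ := by simpa using hdistmat 3 0
  have hn12 : ‖y₁ - y₂‖ = ‖y₁' - y₂'‖ := by simpa using hdistmat 1 2
  have hn13 : ‖y₁ - y₃‖ = ‖y₁' - y₃'‖ := by simpa using hdistmat 1 3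
  have hn23 : ‖y₂ - y₃‖ = ‖y₂' - y₃'‖ := by simpa using hdistmat 2 3
  have hn21 : ‖y₂ - y₁‖ = ‖y₂' - y₁'‖ := by simpa using hdistmat 2 1
  have hn31 : ‖y₃ - y₁‖ = ‖y₃' - y₁'‖ := by simpa using hdistmat 3 1
  have hn32 : ‖y₃ - y₂‖ = ‖y₃' - y₂'‖ := by simpa using hdistmat 3 2
  -- Gram matrix equality
  have hgram : ∀ i j, ⟪(![y₁ - b, y₂ - b, y₃ - b] : Fin 3 → EuclideanSpace ℝ (Fin 3)) i,
      (![y₁ - b, y₂ - b, y₃ - b] : Fin 3 → EuclideanSpace ℝ (Fin 3)) j⟫ =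
      ⟪(![y₁' - b', y₂' - b', y₃' - b'] : Fin 3 → EuclideanSpace ℝ (Fin 3)) i,
      (![y₁' - b', y₂' - b', y₃' - b'] : Fin 3 → EuclideanSpace ℝ (Fin 3)) j⟫ := by
    intro i j
    fin_cases i <;> fin_cases j
    · exact inner_eq_of_norms17 hn1 hn1 (by simp)
    · exact inner_eq_of_norms17 hn1 hn2
        (show ‖y₁ - b - (y₂ - b)‖ = ‖y₁' - b' - (y₂' - b')‖ by
          rw [sub_sub_sub_cancel_right, sub_sub_sub_cancel_right]; exact hn12)
    · exact inner_eq_of_norms17 hn1 hn3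
        (show ‖y₁ - b - (y₃ - b)‖ = ‖y₁' - b' - (y₃' - b')‖ by
          rw [sub_sub_sub_cancel_right, sub_sub_sub_cancel_right]; exact hn13)
    · exact inner_eq_of_norms17 hn2 hn1
        (show ‖y₂ - b - (y₁ - b)‖ = ‖y₂' - b' - (y₁' - b')‖ by
          rw [sub_sub_sub_cancel_right, sub_sub_sub_cancel_right]; exact hn21)
    · exact inner_eq_of_norms17 hn2 hn2 (by simp)
    · exact inner_eq_of_norms17 hn2 hn3
        (show ‖y₂ - b - (y₃ - b)‖ = ‖y₂' - b' - (y₃' - b')‖ by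
          rw [sub_sub_sub_cancel_right, sub_sub_sub_cancel_right]; exact hn23)
    · exact inner_eq_of_norms17 hn3 hn1
        (show ‖y₃ - b - (y₁ - b)‖ = ‖y₃' - b' - (y₁' - b')‖ by
          rw [sub_sub_sub_cancel_right, sub_sub_sub_cancel_right]; exact hn31)
    · exact inner_eq_of_norms17 hn3 hn2
        (show ‖y₃ - b - (y₂ - b)‖ = ‖y₃' - b' - (y₂' - b')‖ by
          rw [sub_sub_sub_cancel_right, sub_sub_sub_cancel_right]; exact hn32)
    · exact inner_eq_of_norms17 hn3 hn3 (by simp)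
  obtain ⟨F, hF⟩ := exists_isometryEquiv_of_gram17 _ _ hgram
  have hF0 : F (y₁ - b) = y₁' - b' := by simpa using hF 0
  have hF1 : F (y₂ - b) = y₂' - b' := by simpa using hF 1
  have hF2 : F (y₃ - b) = y₃' - b' := by simpa using hF 2
  set f : EuclideanSpace ℝ (Fin 3) → EuclideanSpace ℝ (Fin 3) :=
    fun x => b' + F (x - b) with hf
  -- barycenters lie in the affine spans
  have hbmem : b ∈ affineSpan ℝ (S : Set (EuclideanSpace ℝ (Fin 3))) := by
    rw [hb]; exact barycenter_mem_affineSpan17 S hS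
  have hbmem' : b' ∈ affineSpan ℝ (S' : Set (EuclideanSpace ℝ (Fin 3))) := by
    rw [hb']; exact barycenter_mem_affineSpan17 S' hS'
  -- span comparisons
  have hle : affineSpan ℝ ({b, y₁, y₂, y₃} : Set (EuclideanSpace ℝ (Fin 3)))
      ≤ affineSpan ℝ (S : Set (EuclideanSpace ℝ (Fin 3))) := by
    rw [affineSpan_le]
    rintro t (rfl | rfl | rfl | rfl)
    · exact hbmem
    · exact subset_affineSpan ℝ _ hy₁
    · exact subset_affineSpan ℝ _ hy₂
    · exact subset_affineSpan ℝ _ hy₃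
  have hle' : affineSpan ℝ ({b', y₁', y₂', y₃'} : Set (EuclideanSpace ℝ (Fin 3)))
      ≤ affineSpan ℝ (S' : Set (EuclideanSpace ℝ (Fin 3))) := by
    rw [affineSpan_le]
    rintro t (rfl | rfl | rfl | rfl)
    · exact hbmem'
    · exact subset_affineSpan ℝ _ hy₁'
    · exact subset_affineSpan ℝ _ hy₂'
    · exact subset_affineSpan ℝ _ hy₃'
  have hdirle : vectorSpan ℝ ({b, y₁, y₂, y₃} : Set (EuclideanSpace ℝ (Fin 3)))
      ≤ vectorSpan ℝ (S : Set (EuclideanSpace ℝ (Fin 3))) := by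
    have := AffineSubspace.direction_le hle
    rwa [direction_affineSpan, direction_affineSpan] at this
  have hdirle' : vectorSpan ℝ ({b', y₁', y₂', y₃'} : Set (EuclideanSpace ℝ (Fin 3)))
      ≤ vectorSpan ℝ (S' : Set (EuclideanSpace ℝ (Fin 3))) := by
    have := AffineSubspace.direction_le hle'
    rwa [direction_affineSpan, direction_affineSpan] at this
  have hveq : vectorSpan ℝ ({b, y₁, y₂, y₃} : Set (EuclideanSpace ℝ (Fin 3)))
      = vectorSpan ℝ (S : Set (EuclideanSpace ℝ (Fin 3))) :=
    Submodule.eq_of_le_of_finrank_eq hdirle hspan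
  have hveq' : vectorSpan ℝ ({b', y₁', y₂', y₃'} : Set (EuclideanSpace ℝ (Fin 3)))
      = vectorSpan ℝ (S' : Set (EuclideanSpace ℝ (Fin 3))) :=
    Submodule.eq_of_le_of_finrank_eq hdirle' hspan'
  have haffeq' : affineSpan ℝ ({b', y₁', y₂', y₃'} : Set (EuclideanSpace ℝ (Fin 3)))
      = affineSpan ℝ (S' : Set (EuclideanSpace ℝ (Fin 3))) :=
    AffineSubspace.ext_of_direction_eq
      (by rw [direction_affineSpan, direction_affineSpan, hveq'])
      ⟨b', subset_affineSpan ℝ _ (Set.mem_insert _ _), hbmem'⟩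
  -- vector spans as linear spans of the three difference vectors
  have hWspan : vectorSpan ℝ ({b, y₁, y₂, y₃} : Set (EuclideanSpace ℝ (Fin 3)))
      = Submodule.span ℝ ({y₁ - b, y₂ - b, y₃ - b} : Set (EuclideanSpace ℝ (Fin 3))) := by
    rw [vectorSpan_eq_span_vsub_set_right ℝ (Set.mem_insert b {y₁, y₂, y₃})]
    simp only [Set.image_insert_eq, Set.image_singleton, vsub_eq_sub, sub_self]
    rw [Submodule.span_insert_zero]
  have hWspan' : vectorSpan ℝ ({b', y₁', y₂', y₃'} : Set (EuclideanSpace ℝ (Fin 3)))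
      = Submodule.span ℝ ({y₁' - b', y₂' - b', y₃' - b'} : Set (EuclideanSpace ℝ (Fin 3))) := by
    rw [vectorSpan_eq_span_vsub_set_right ℝ (Set.mem_insert b' {y₁', y₂', y₃'})]
    simp only [Set.image_insert_eq, Set.image_singleton, vsub_eq_sub, sub_self]
    rw [Submodule.span_insert_zero]
  -- F maps the span of the v's into the span of the w's
  have hFmap : ∀ u ∈ Submodule.span ℝ ({y₁ - b, y₂ - b, y₃ - b} : Set (EuclideanSpace ℝ (Fin 3))),
      F u ∈ Submodule.span ℝ ({y₁' - b', y₂' - b', y₃' - b'} : Set (EuclideanSpace ℝ (Fin 3))) := by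
    intro u hu
    have hle2 : Submodule.span ℝ ({y₁ - b, y₂ - b, y₃ - b} : Set (EuclideanSpace ℝ (Fin 3)))
        ≤ Submodule.comap (F.toLinearEquiv : EuclideanSpace ℝ (Fin 3) →ₗ[ℝ] EuclideanSpace ℝ (Fin 3))
          (Submodule.span ℝ ({y₁' - b', y₂' - b', y₃' - b'} : Set (EuclideanSpace ℝ (Fin 3)))) := by
      rw [Submodule.span_le]
      rintro z (rfl | rfl | rfl)
      · exact Submodule.mem_comap.mpr (by rw [show (F.toLinearEquiv : _ →ₗ[ℝ] _) (y₁ - b) = F (y₁ - b) from rfl, hF0]; exact Submodule.subset_span (Set.mem_insert _ _))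
      · exact Submodule.mem_comap.mpr (by rw [show (F.toLinearEquiv : _ →ₗ[ℝ] _) (y₂ - b) = F (y₂ - b) from rfl, hF1]; exact Submodule.subset_span (Set.mem_insert_of_mem _ (Set.mem_insert _ _)))
      · exact Submodule.mem_comap.mpr (by rw [show (F.toLinearEquiv : _ →ₗ[ℝ] _) (y₃ - b) = F (y₃ - b) from rfl, hF2]; exact Submodule.subset_span (Set.mem_insert_of_mem _ (Set.mem_insert_of_mem _ rfl)))
    exact hle2 hu
  -- the key pointwise statement
  have hkey : ∀ x ∈ S, f x ∈ S' := by
    intro x hx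
    -- find the matching point x'
    have hmemmap : (‖x - b‖, ‖x - y₁‖, ‖x - y₂‖, ‖x - y₃‖) ∈
        S'.val.map (fun x => (‖x - b'‖, ‖x - y₁'‖, ‖x - y₂'‖, ‖x - y₃'‖)) := by
      rw [← hprof]
      exact Multiset.mem_map_of_mem _ hx
    obtain ⟨x', hx', heq⟩ := Multiset.mem_map.mp hmemmap
    rw [Prod.ext_iff, Prod.ext_iff, Prod.ext_iff] at heq
    obtain ⟨e0, e1, e2, e3⟩ : ‖x' - b'‖ = ‖x - b‖ ∧ ‖x' - y₁'‖ = ‖x - y₁‖ ∧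
        ‖x' - y₂'‖ = ‖x - y₂‖ ∧ ‖x' - y₃'‖ = ‖x - y₃‖ :=
      ⟨heq.1, heq.2.1, heq.2.2.1, heq.2.2.2⟩
    have hx'mem : x' ∈ S' := hx'
    -- memberships in the affine span of the primed quadruple
    have hq : x' ∈ affineSpan ℝ ({b', y₁', y₂', y₃'} : Set (EuclideanSpace ℝ (Fin 3))) := by
      rw [haffeq']
      exact subset_affineSpan ℝ _ hx'mem
    have hp : f x ∈ affineSpan ℝ ({b', y₁', y₂', y₃'} : Set (EuclideanSpace ℝ (Fin 3))) := by
      have hxa : x ∈ affineSpan ℝ (S : Set (EuclideanSpace ℝ (Fin 3))) :=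
        subset_affineSpan ℝ _ hx
      have hxb : x - b ∈ vectorSpan ℝ (S : Set (EuclideanSpace ℝ (Fin 3))) := by
        have := AffineSubspace.vsub_mem_direction hxa hbmem
        rwa [direction_affineSpan, vsub_eq_sub] at this
      rw [← hveq, hWspan] at hxb
      have hFx := hFmap _ hxb
      rw [← hWspan'] at hFx
      have hb'm : b' ∈ affineSpan ℝ ({b', y₁', y₂', y₃'} : Set (EuclideanSpace ℝ (Fin 3))) :=
        subset_affineSpan ℝ _ (Set.mem_insert _ _)
      have := AffineSubspace.vadd_mem_of_mem_direction
        (by rwa [direction_affineSpan] : F (x - b) ∈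
          (affineSpan ℝ ({b', y₁', y₂', y₃'} : Set (EuclideanSpace ℝ (Fin 3)))).direction) hb'm
      have heqf : f x = F (x - b) +ᵥ b' := by
        simp [f, vadd_eq_add, add_comm]
      rwa [heqf]
    have hdists : ∀ t ∈ ({b', y₁', y₂', y₃'} : Set (EuclideanSpace ℝ (Fin 3))),
        ‖f x - t‖ = ‖x' - t‖ := by
      intro t ht
      simp only [Set.mem_insert_iff, Set.mem_singleton_iff] at ht
      rcases ht with h | h | h | h <;> rw [h]
      · have h1 : f x - b' = F (x - b) := by simp [f]
        rw [h1, F.norm_map, ← e0]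
      · have h1 : f x - y₁' = F (x - y₁) := by
          rw [hf]
          calc b' + F (x - b) - y₁' = F (x - b) - (y₁' - b') := by abel
            _ = F (x - b) - F (y₁ - b) := by rw [hF0]
            _ = F ((x - b) - (y₁ - b)) := (map_sub F _ _).symm
            _ = F (x - y₁) := by rw [sub_sub_sub_cancel_right]
        rw [h1, F.norm_map, ← e1]
      · have h1 : f x - y₂' = F (x - y₂) := by
          rw [hf]
          calc b' + F (x - b) - y₂' = F (x - b) - (y₂' - b') := by abel
            _ = F (x - b) - F (y₂ - b) := by rw [hF1]
            _ = F ((x - b) - (y₂ - b)) := (map_sub F _ _).symm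
            _ = F (x - y₂) := by rw [sub_sub_sub_cancel_right]
        rw [h1, F.norm_map, ← e2]
      · have h1 : f x - y₃' = F (x - y₃) := by
          rw [hf]
          calc b' + F (x - b) - y₃' = F (x - b) - (y₃' - b') := by abel
            _ = F (x - b) - F (y₃ - b) := by rw [hF2]
            _ = F ((x - b) - (y₃ - b)) := (map_sub F _ _).symm
            _ = F (x - y₃) := by rw [sub_sub_sub_cancel_right]
        rw [h1, F.norm_map, ← e3]
    have : f x = x' := eq_of_dist_eq_on_set17 _ _ _ hp hq hdists
    rw [this]
    exact hx'mem
  -- conclude by a cardinality argument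
  have hinj : Function.Injective f := by
    intro u v huv
    have h1 : F (u - b) = F (v - b) := by
      have := huv
      simp only [f] at this
      exact add_left_cancel this
    have h2 := F.injective h1
    exact sub_left_injective h2
  have hcard : S.card = S'.card := by
    have := congrArg Multiset.card hprof
    simpa using this
  have himg : Finset.image f S = S' := by
    apply Finset.eq_of_subset_of_card_le
    · intro z hz
      obtain ⟨x, hx, rfl⟩ := Finset.mem_image.mp hz
      exact hkey x hx
    · rw [Finset.card_image_of_injective _ hinj, hcard]
  refine ⟨F, ?_⟩
  rw [← himg, Finset.coe_image]
end
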